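/- arXiv:1605.01940 — 3 statements merged into one kernel-verified Lean document; each statement's English description precedes it below -/
import Mathlib

section
/- Let p(n,k) = P(R_n = k) where R_n is the number of local minima of a uniformly random permutation of {1,…,n-1} (with boundary conventions: position 1 counts if σ(1)<σ(2), position n-1 counts if σ(n-1)<σ(n-2)). Then for n ≥ 2: p(n+1,k) = (2k/n)·p(n,k) + ((n-2k+2)/n)·p(n,k-1). -/
/-- `permVal σ i` is the value at (1-based) position `i` of the permutation `σ` of
`{1, …, m}` (represented as a permutation of `Fin m`); values are in `{1, …, m}`. -/
def permVal {m : ℕ} (σ : Equiv.Perm (Fin m)) (i : ℕ) : ℕ :=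
  if h : i - 1 < m then (σ ⟨i - 1, h⟩ : ℕ) + 1 else 0

/-- Position `i` of the permutation `σ` of `{1, …, m}` is a local minimum: either `i = 1`
and `σ(1) < σ(2)`, or `i = m` and `σ(m) < σ(m-1)`, or `i` is interior and
`σ(i) < min(σ(i-1), σ(i+1))`. -/
abbrev isLocalMin {m : ℕ} (σ : Equiv.Perm (Fin m)) (i : ℕ) : Prop :=
  (i = 1 ∧ permVal σ 1 < permVal σ 2) ∨ (i = m ∧ permVal σ m < permVal σ (m - 1)) ∨
    (2 ≤ i ∧ i ≤ m - 1 ∧ permVal σ i < min (permVal σ (i - 1)) (permVal σ (i + 1)))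

/-- `m(n, k)`: the number of permutations of `{1, …, n}` with exactly `k` local minima
(the index `k` is an integer so that `m(n, k) = 0` for `k < 0`). -/
def numPermsWithLocalMins (n : ℕ) (k : ℤ) : ℕ :=
  (Finset.univ.filter fun σ : Equiv.Perm (Fin n) =>
    (((Finset.Icc 1 n).filter fun i => isLocalMin σ i).card : ℤ) = k).card


open Finset Equiv

/-- 0-based value function: `vN σ j = σ(j) + 1` for `j < M`, else 0. -/
def vN {M : ℕ} (σ : Equiv.Perm (Fin M)) (j : ℕ) : ℕ := permVal σ (j + 1)

lemma vN_lt {M : ℕ} (σ : Equiv.Perm (Fin M)) {j : ℕ} (h : j < M) :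
    vN σ j = (σ ⟨j, h⟩ : ℕ) + 1 := by
  simp [vN, permVal, h]

lemma vN_inj {M : ℕ} (σ : Equiv.Perm (Fin M)) {i j : ℕ} (hi : i < M) (hj : j < M)
    (h : vN σ i = vN σ j) : i = j := by
  rw [vN_lt σ hi, vN_lt σ hj] at h
  have := σ.injective (Fin.val_injective (by omega : ((σ ⟨i, hi⟩ : ℕ)) = (σ ⟨j, hj⟩ : ℕ)))
  exact congrArg Fin.val (by exact_mod_cast this)

/-- 0-based local minimum predicate. -/
def minP (v : ℕ → ℕ) (M j : ℕ) : Prop :=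
  (j = 0 ∨ v j < v (j - 1)) ∧ (j + 1 = M ∨ v j < v (j + 1))

instance (v : ℕ → ℕ) (M j : ℕ) : Decidable (minP v M j) := by unfold minP; infer_instance

/-- Count of local minima, 0-based. -/
def cnt {M : ℕ} (σ : Equiv.Perm (Fin M)) : ℕ :=
  ((range M).filter (minP (vN σ) M)).card

lemma cnt_eq {M : ℕ} (hM : 2 ≤ M) (σ : Equiv.Perm (Fin M)) :
    ((Finset.Icc 1 M).filter fun i => isLocalMin σ i).card = cnt σ := by
  unfold cnt
  apply Finset.card_nbij' (fun i => i - 1) (fun j => j + 1)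
  · intro i hi
    simp only [Finset.mem_coe, mem_filter, mem_Icc, mem_range] at hi ⊢
    obtain ⟨⟨h1, h2⟩, hm⟩ := hi
    refine ⟨by omega, ?_⟩
    obtain ⟨j, rfl⟩ : ∃ j, i = j + 1 := ⟨i - 1, by omega⟩
    simp only [Nat.add_sub_cancel]
    have hperm : ∀ a : ℕ, permVal σ (a + 1) = vN σ a := fun a => rfl
    rcases hm with ⟨hi1, h⟩ | ⟨hiM, h⟩ | ⟨hge, hle, h⟩
    · have : j = 0 := by omega
      subst this
      exact ⟨Or.inl rfl, Or.inr (by simpa [vN] using h)⟩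
    · have : j = M - 1 := by omega
      subst this
      constructor
      · right
        have e1 : M - 1 + 1 = M := by omega
        have e2 : M - 1 - 1 + 1 = M - 1 := by omega
        show permVal σ (M - 1 + 1) < permVal σ (M - 1 - 1 + 1)
        rw [e1, e2]
        exact h
      · left; omega
    · rw [lt_min_iff] at h
      have e2 : j - 1 + 1 = j := by omega
      constructor
      · right
        show permVal σ (j + 1) < permVal σ (j - 1 + 1)
        rw [e2]; exact h.1
      · right; exact h.2
  · intro j hj
    simp only [Finset.mem_coe, mem_filter, mem_range, mem_Icc] at hj ⊢
    obtain ⟨hjM, ⟨hL, hR⟩⟩ := hj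
    refine ⟨⟨by omega, by omega⟩, ?_⟩
    have hperm : ∀ a : ℕ, permVal σ (a + 1) = vN σ a := fun a => rfl
    by_cases hj0 : j = 0
    · subst hj0
      left
      refine ⟨rfl, ?_⟩
      rcases hR with h | h
      · omega
      · simpa [vN] using h
    · by_cases hjM' : j + 1 = M
      · right; left
        refine ⟨by omega, ?_⟩
        rcases hL with h | h
        · omega
        · have e1 : M - 1 = j := by omega
          have e2 : j - 1 + 1 = j := by omega
          have h2 : permVal σ (j + 1) < permVal σ (j - 1 + 1) := h
          rw [e2] at h2
          have e3 : permVal σ M = permVal σ (j + 1) := by rw [hjM']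
          rw [e1, e3]
          exact h2
      · right; right
        refine ⟨by omega, by omega, ?_⟩
        rw [lt_min_iff]
        have e2 : j - 1 + 1 = j := by omega
        constructor
        · rcases hL with h | h
          · omega
          · have h2 : permVal σ (j + 1) < permVal σ (j - 1 + 1) := h
            rw [e2] at h2; exact h2
        · rcases hR with h | h
          · omega
          · exact h
  · intro i hi
    simp only [Finset.mem_coe, mem_filter, mem_Icc] at hi ⊢
    omega
  · intro j _
    simp

lemma numPerms_eq {M : ℕ} (hM : 2 ≤ M) (k : ℤ) :
    numPermsWithLocalMins M k =
      (Finset.univ.filter fun σ : Equiv.Perm (Fin M) => (cnt σ : ℤ) = k).card := by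
  unfold numPermsWithLocalMins
  congr 1
  apply Finset.filter_congr
  intro σ _
  rw [cnt_eq hM]

lemma transitions (P : ℕ → Prop) [DecidablePred P] (h0 : ¬ P 0) (M : ℕ) :
    ((range M).filter fun i => ¬ P i ∧ P (i+1)).card =
    ((range M).filter fun i => P i ∧ ¬ P (i+1)).card + (if P M then 1 else 0) := by
  induction M with
  | zero => simp [h0]
  | succ M ih =>
    rw [Finset.range_add_one, filter_insert, filter_insert]
    have hnm : M ∉ range M := Finset.notMem_range_self
    have hc1 : M ∉ (range M).filter fun i => ¬ P i ∧ P (i+1) :=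
      fun h => hnm (Finset.mem_of_mem_filter _ h)
    have hc2 : M ∉ (range M).filter fun i => P i ∧ ¬ P (i+1) :=
      fun h => hnm (Finset.mem_of_mem_filter _ h)
    by_cases h1 : P M <;> by_cases h2 : P (M+1) <;>
      simp only [h1, h2, not_true, not_false_iff, true_and, false_and,
        and_true, and_false, if_true, if_false, Finset.card_insert_of_notMem hc1,
        Finset.card_insert_of_notMem hc2] at ih ⊢ <;>
      omega


lemma four_split {α : Type*} (s : Finset α) (P Q : α → Prop) [DecidablePred P]
    [DecidablePred Q] :
    (s.filter fun a => P a ∧ Q a).card + (s.filter fun a => P a ∧ ¬ Q a).card +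
      (s.filter fun a => ¬ P a ∧ Q a).card + (s.filter fun a => ¬ P a ∧ ¬ Q a).card
      = s.card := by
  have h1 := Finset.card_filter_add_card_filter_not (s := s) P
  have h2 := Finset.card_filter_add_card_filter_not (s := s.filter P) Q
  have h3 := Finset.card_filter_add_card_filter_not (s := s.filter fun a => ¬ P a) Q
  rw [Finset.filter_filter, Finset.filter_filter] at h2 h3
  omega

section Alt
variable {M : ℕ} (τ : Equiv.Perm (Fin M))

/-- "ascent marker" sequence. -/
def gP (τ : Equiv.Perm (Fin M)) (j : ℕ) : Prop :=
  j = M ∨ (1 ≤ j ∧ j < M ∧ vN τ (j - 1) < vN τ j)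

instance (j : ℕ) : Decidable (gP τ j) := by unfold gP; infer_instance

/-- left condition (position is smaller than its left neighbour / boundary). -/
def Ap (τ : Equiv.Perm (Fin M)) (i : ℕ) : Prop := i = 0 ∨ vN τ i < vN τ (i - 1)
/-- right condition. -/
def Bp (τ : Equiv.Perm (Fin M)) (i : ℕ) : Prop := i + 1 = M ∨ vN τ i < vN τ (i + 1)

instance (i : ℕ) : Decidable (Ap τ i) := by unfold Ap; infer_instance
instance (i : ℕ) : Decidable (Bp τ i) := by unfold Bp; infer_instance

lemma minP_eq_ApBp (i : ℕ) : minP (vN τ) M i ↔ (Ap τ i ∧ Bp τ i) := Iff.rfl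

lemma A_iff {i : ℕ} (hi : i < M) : Ap τ i ↔ ¬ gP τ i := by
  unfold Ap gP
  have hne : i ≠ 0 → vN τ i ≠ vN τ (i - 1) :=
    fun h0 h => by have := vN_inj τ hi (by omega) h; omega
  constructor
  · rintro (h | h) <;> rintro (h2 | ⟨h3, h4, h5⟩) <;> omega
  · intro h
    push_neg at h
    rcases Nat.eq_zero_or_pos i with h0 | h0
    · exact Or.inl h0
    · right
      have := h.2 (by omega) hi
      have := hne (by omega)
      omega

lemma B_iff {i : ℕ} (hi : i < M) : Bp τ i ↔ gP τ (i + 1) := by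
  unfold Bp gP
  constructor
  · rintro (h | h)
    · exact Or.inl h
    · by_cases hM : i + 1 = M
      · exact Or.inl hM
      · right
        simp only [Nat.add_sub_cancel]
        omega
  · rintro (h | ⟨h1, h2, h3⟩)
    · exact Or.inl h
    · right
      simpa using h3

lemma gP_zero (hM : 1 ≤ M) : ¬ gP τ 0 := by unfold gP; omega
lemma gP_M : gP τ M := Or.inl rfl

/-- key identity: X1 + X2 + 2·cnt = M + 1 where X1,X2 are the mixed classes. -/
lemma key_count (hM : 1 ≤ M) :
    ((range M).filter fun i => Ap τ i ∧ ¬ Bp τ i).card +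
      ((range M).filter fun i => ¬ Ap τ i ∧ Bp τ i).card + 2 * cnt τ = M + 1 := by
  have h4 := four_split (range M) (Ap τ) (Bp τ)
  have hmins : cnt τ = ((range M).filter fun i => ¬ gP τ i ∧ gP τ (i+1)).card := by
    unfold cnt
    congr 1
    apply Finset.filter_congr
    intro i hi
    rw [mem_range] at hi
    rw [minP_eq_ApBp, A_iff τ hi, B_iff τ hi]
  have hpeaks : ((range M).filter fun i => ¬ Ap τ i ∧ ¬ Bp τ i).card =
      ((range M).filter fun i => gP τ i ∧ ¬ gP τ (i+1)).card := by
    congr 1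
    apply Finset.filter_congr
    intro i hi
    rw [mem_range] at hi
    rw [A_iff τ hi, B_iff τ hi, not_not]
  have htrans := transitions (gP τ) (gP_zero τ hM) M
  rw [if_pos (gP_M τ)] at htrans
  have hABcnt : ((range M).filter fun i => Ap τ i ∧ Bp τ i).card = cnt τ := by
    unfold cnt
    congr 1
  have hrange : (range M).card = M := Finset.card_range M
  omega
end Alt

/-- insert the max value at position `p`. -/
def ins {M : ℕ} (p : Fin (M+1)) (τ : Equiv.Perm (Fin M)) : Equiv.Perm (Fin (M+1)) :=
  (finSuccEquiv' p).trans ((Equiv.optionCongr τ).trans (finSuccEquiv' (Fin.last M)).symm)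

lemma ins_at {M : ℕ} (p : Fin (M+1)) (τ : Equiv.Perm (Fin M)) : ins p τ p = Fin.last M := by
  simp [ins, finSuccEquiv'_at]

lemma ins_succAbove {M : ℕ} (p : Fin (M+1)) (τ : Equiv.Perm (Fin M)) (i : Fin M) :
    ins p τ (p.succAbove i) = (τ i).castSucc := by
  simp [ins, finSuccEquiv'_succAbove, ← Fin.succAbove_last]

lemma vN_ins {M : ℕ} (p : Fin (M+1)) (τ : Equiv.Perm (Fin M)) {q : ℕ} (hq : q < M + 1) :
    vN (ins p τ) q =
      if q = (p : ℕ) then M + 1 else if q < (p : ℕ) then vN τ q else vN τ (q - 1) := by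
  have hpM : (p : ℕ) ≤ M := by omega
  rw [vN_lt _ hq]
  by_cases h1 : q = (p : ℕ)
  · have : (⟨q, hq⟩ : Fin (M+1)) = p := Fin.ext h1
    rw [this, ins_at, if_pos h1]
    simp [Fin.last]
  · rw [if_neg h1]
    by_cases h2 : q < (p : ℕ)
    · rw [if_pos h2]
      have hqM : q < M := by omega
      set i : Fin M := ⟨q, hqM⟩ with hi
      have hlt : i.castSucc < p := by
        rw [Fin.lt_iff_val_lt_val, Fin.coe_castSucc]; exact h2
      have : (⟨q, hq⟩ : Fin (M+1)) = p.succAbove i := by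
        rw [Fin.succAbove_of_castSucc_lt p i hlt]; exact Fin.ext rfl
      rw [this, ins_succAbove, vN_lt τ hqM]
      simp [hi]
    · rw [if_neg h2]
      have hq1 : 1 ≤ q := by omega
      have hqM : q - 1 < M := by omega
      set i : Fin M := ⟨q - 1, hqM⟩ with hi
      have hle : p ≤ i.castSucc := by
        rw [Fin.le_iff_val_le_val, Fin.coe_castSucc]; simp only [hi]; omega
      have : (⟨q, hq⟩ : Fin (M+1)) = p.succAbove i := by
        rw [Fin.succAbove_of_le_castSucc p i hle]
        exact Fin.ext (by simp [hi]; omega)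
      rw [this, ins_succAbove, vN_lt τ hqM]
      simp [hi]

lemma vN_le {M : ℕ} (τ : Equiv.Perm (Fin M)) {x : ℕ} (hx : x < M) : vN τ x ≤ M := by
  rw [vN_lt τ hx]
  have := (τ ⟨x, hx⟩).isLt
  omega

lemma ins_bijective (M : ℕ) :
    Function.Bijective (fun x : Fin (M+1) × Equiv.Perm (Fin M) => ins x.1 x.2) := by
  rw [Fintype.bijective_iff_injective_and_card]
  constructor
  · rintro ⟨p, τ⟩ ⟨p', τ'⟩ h
    simp only at h
    have hp : p = p' := by
      have h1 : ins p τ p = ins p τ p' := by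
        rw [ins_at, h, ins_at]
      exact (ins p τ).injective h1
    subst hp
    have hτ : τ = τ' := by
      ext i
      have h1 : ins p τ (p.succAbove i) = ins p τ' (p.succAbove i) := by rw [h]
      rw [ins_succAbove, ins_succAbove] at h1
      have := Fin.castSucc_injective M h1
      rw [this]
    rw [hτ]
  · simp [Fintype.card_perm, Nat.factorial_succ]

section Ins
variable {M : ℕ} (p : Fin (M+1)) (τ : Equiv.Perm (Fin M))

lemma not_min_ins_at_p (hM : 1 ≤ M) : ¬ minP (vN (ins p τ)) (M+1) (p : ℕ) := by
  have hpM : (p : ℕ) ≤ M := by omega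
  unfold minP
  have hv0 : vN (ins p τ) (p : ℕ) = M + 1 := by
    rw [vN_ins p τ (by omega), if_pos rfl]
  rintro ⟨hL, hR⟩
  have hp0 : (p : ℕ) = 0 := by
    rcases hL with h | h
    · exact h
    · by_contra hne
      have hv1 : vN (ins p τ) ((p : ℕ) - 1) = vN τ ((p : ℕ) - 1) := by
        rw [vN_ins p τ (by omega), if_neg (by omega), if_pos (by omega)]
      have := vN_le τ (x := (p : ℕ) - 1) (by omega)
      omega
  have hpM' : (p : ℕ) = M := by
    rcases hR with h | h
    · omega
    · by_contra hne
      have hv1 : vN (ins p τ) ((p : ℕ) + 1) = vN τ ((p : ℕ) + 1 - 1) := by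
        rw [vN_ins p τ (by omega), if_neg (by omega), if_neg (by omega)]
      simp only [Nat.add_sub_cancel] at hv1
      have := vN_le τ (x := (p : ℕ)) (by omega)
      omega
  omega

lemma min_ins_iff (hM : 1 ≤ M) {i : ℕ} (hi : i < M) :
    minP (vN (ins p τ)) (M+1) (if i < (p : ℕ) then i else i + 1) ↔
      ((Ap τ i ∨ (p : ℕ) = i) ∧ (Bp τ i ∨ (p : ℕ) = i + 1)) := by
  have hpM : (p : ℕ) ≤ M := by omega
  unfold minP Ap Bp
  by_cases hip : i < (p : ℕ)
  · rw [if_pos hip]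
    have hv0 : vN (ins p τ) i = vN τ i := by
      rw [vN_ins p τ (by omega), if_neg (by omega), if_pos hip]
    have hv1 : vN (ins p τ) (i - 1) = vN τ (i - 1) := by
      rw [vN_ins p τ (by omega), if_neg (by omega), if_pos (by omega)]
    rw [hv0, hv1]
    by_cases h2 : i + 1 = (p : ℕ)
    · have hv2 : vN (ins p τ) (i + 1) = M + 1 := by
        rw [vN_ins p τ (by omega), if_pos h2]
      rw [hv2]
      have hb0 := vN_le τ hi
      omega
    · have hv2 : vN (ins p τ) (i + 1) = vN τ (i + 1) := by
        rw [vN_ins p τ (by omega), if_neg h2, if_pos (by omega)]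
      rw [hv2]
      omega
  · rw [if_neg hip]
    simp only [Nat.add_sub_cancel]
    have hv2 : vN (ins p τ) (i + 1) = vN τ i := by
      rw [vN_ins p τ (by omega), if_neg (by omega), if_neg (by omega)]
      simp only [Nat.add_sub_cancel]
    rw [hv2]
    have hb0 := vN_le τ hi
    by_cases h0 : i = (p : ℕ)
    · have hv0 : vN (ins p τ) i = M + 1 := by
        rw [vN_ins p τ (by omega), if_pos h0]
      rw [hv0]
      by_cases h3 : i + 1 = M
      · omega
      · have hv3 : vN (ins p τ) (i + 1 + 1) = vN τ (i + 1) := by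
          rw [vN_ins p τ (by omega), if_neg (by omega), if_neg (by omega)]
          simp only [Nat.add_sub_cancel]
        rw [hv3]
        omega
    · have hv0 : vN (ins p τ) i = vN τ (i - 1) := by
        rw [vN_ins p τ (by omega), if_neg (fun h => h0 h), if_neg (by omega)]
      rw [hv0]
      by_cases h3 : i + 1 = M
      · omega
      · have hv3 : vN (ins p τ) (i + 1 + 1) = vN τ (i + 1) := by
          rw [vN_ins p τ (by omega), if_neg (by omega), if_neg (by omega)]
          simp only [Nat.add_sub_cancel]
        rw [hv3]
        omega
end Ins

lemma cnt_ins_card {M : ℕ} (p : Fin (M+1)) (τ : Equiv.Perm (Fin M)) (hM : 1 ≤ M) :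
    cnt (ins p τ) =
      ((range M).filter fun i =>
        (Ap τ i ∨ (p : ℕ) = i) ∧ (Bp τ i ∨ (p : ℕ) = i + 1)).card := by
  unfold cnt
  apply Finset.card_nbij' (fun q => if q < (p : ℕ) then q else q - 1)
    (fun i => if i < (p : ℕ) then i else i + 1)
  · intro q hq
    rw [Finset.mem_coe, mem_filter, mem_range] at hq
    obtain ⟨hq1, hq2⟩ := hq
    have hqp : q ≠ (p : ℕ) := fun h => not_min_ins_at_p p τ hM (h ▸ hq2)
    have hpM : (p : ℕ) ≤ M := by omega
    simp only [Finset.mem_coe, mem_filter, mem_range]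
    by_cases h : q < (p : ℕ)
    · rw [if_pos h]
      have hqM : q < M := by omega
      refine ⟨hqM, ?_⟩
      rw [← min_ins_iff p τ hM hqM, if_pos h]
      exact hq2
    · rw [if_neg h]
      have hq1' : 1 ≤ q := by omega
      have hqM : q - 1 < M := by omega
      refine ⟨hqM, ?_⟩
      rw [← min_ins_iff p τ hM hqM, if_neg (by omega)]
      have e : q - 1 + 1 = q := by omega
      rw [e]
      exact hq2
  · intro i hi
    rw [Finset.mem_coe, mem_filter, mem_range] at hi
    obtain ⟨hi1, hi2⟩ := hi
    simp only [Finset.mem_coe, mem_filter, mem_range]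
    constructor
    · split_ifs <;> omega
    · rw [min_ins_iff p τ hM hi1]
      exact hi2
  · intro q hq
    simp only [Finset.mem_coe, mem_filter, mem_range] at hq ⊢
    have hqp : q ≠ (p : ℕ) := fun h => not_min_ins_at_p p τ hM (h ▸ hq.2)
    split_ifs <;> omega
  · intro i hi
    simp only [Finset.mem_coe, mem_filter, mem_range] at hi ⊢
    split_ifs <;> omega

/-- the "extra minimum" indicator for inserting at position `p`. -/
def eVal {M : ℕ} (τ : Equiv.Perm (Fin M)) (p : Fin (M+1)) : ℕ :=
  (if (p : ℕ) < M ∧ ¬ Ap τ (p : ℕ) ∧ Bp τ (p : ℕ) then 1 else 0) +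
  (if 1 ≤ (p : ℕ) ∧ Ap τ ((p : ℕ) - 1) ∧ ¬ Bp τ ((p : ℕ) - 1) then 1 else 0)

lemma excl {M : ℕ} (τ : Equiv.Perm (Fin M)) (p : Fin (M+1)) :
    ¬ (((p : ℕ) < M ∧ ¬ Ap τ (p : ℕ) ∧ Bp τ (p : ℕ)) ∧
       (1 ≤ (p : ℕ) ∧ Ap τ ((p : ℕ) - 1) ∧ ¬ Bp τ ((p : ℕ) - 1))) := by
  rintro ⟨⟨h1, h2, h3⟩, h4, h5, h6⟩
  simp only [Ap, Bp] at h2 h6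
  push_neg at h2 h6
  have e : (p : ℕ) - 1 + 1 = (p : ℕ) := by omega
  rw [e] at h6
  have h7 := h2.2
  have h8 := h6.2
  have : vN τ (p : ℕ) = vN τ ((p : ℕ) - 1) := by omega
  have := vN_inj τ h1 (by omega) this
  omega

lemma eVal_le_one {M : ℕ} (τ : Equiv.Perm (Fin M)) (p : Fin (M+1)) : eVal τ p ≤ 1 := by
  unfold eVal
  split_ifs with h1 h2
  · exact absurd ⟨h1, h2⟩ (excl τ p)
  · omega
  · omega
  · omega

lemma card_filter_eq_and (a : ℕ) (P : ℕ → Prop) [DecidablePred P] (s : Finset ℕ) :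
    (s.filter fun i => i = a ∧ P i).card = if a ∈ s ∧ P a then 1 else 0 := by
  split_ifs with h
  · rw [Finset.card_eq_one]
    refine ⟨a, ?_⟩
    ext x
    simp only [mem_filter, Finset.mem_singleton]
    constructor
    · rintro ⟨_, rfl, _⟩; rfl
    · rintro rfl; exact ⟨h.1, rfl, h.2⟩
  · rw [Finset.card_eq_zero, Finset.eq_empty_iff_forall_notMem]
    intro x hx
    rw [mem_filter] at hx
    obtain ⟨hxs, rfl, hP⟩ := hx
    exact h ⟨hxs, hP⟩

lemma card_E {M : ℕ} (τ : Equiv.Perm (Fin M)) (p : Fin (M+1)) (hM : 1 ≤ M) :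
    ((range M).filter fun i =>
        (¬ Ap τ i ∧ Bp τ i ∧ (p : ℕ) = i) ∨ (Ap τ i ∧ ¬ Bp τ i ∧ (p : ℕ) = i + 1)).card
      = eVal τ p := by
  have hpM : (p : ℕ) ≤ M := by omega
  rw [Finset.filter_or, Finset.card_union_of_disjoint]
  · have e1 : ((range M).filter fun i => ¬ Ap τ i ∧ Bp τ i ∧ (p : ℕ) = i).card
        = if (p : ℕ) < M ∧ ¬ Ap τ (p : ℕ) ∧ Bp τ (p : ℕ) then 1 else 0 := by
      rw [Finset.filter_congr (q := fun i => i = (p : ℕ) ∧ (¬ Ap τ i ∧ Bp τ i))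
        (fun i _ => by constructor
                       · rintro ⟨h1, h2, h3⟩; exact ⟨h3.symm, h1, h2⟩
                       · rintro ⟨h1, h2, h3⟩; exact ⟨h2, h3, h1.symm⟩)]
      rw [card_filter_eq_and]
      congr 1
      simp [mem_range, and_assoc]
    have e2 : ((range M).filter fun i => Ap τ i ∧ ¬ Bp τ i ∧ (p : ℕ) = i + 1).card
        = if 1 ≤ (p : ℕ) ∧ Ap τ ((p : ℕ) - 1) ∧ ¬ Bp τ ((p : ℕ) - 1) then 1 else 0 := by
      rw [Finset.filter_congr (q := fun i =>
          i = (p : ℕ) - 1 ∧ (Ap τ i ∧ ¬ Bp τ i ∧ (p : ℕ) = i + 1))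
        (fun i _ => by constructor
                       · rintro ⟨h1, h2, h3⟩; exact ⟨by omega, h1, h2, h3⟩
                       · rintro ⟨h1, h2⟩; exact h2)]
      rw [card_filter_eq_and]
      apply if_congr _ rfl rfl
      rw [mem_range]
      constructor
      · rintro ⟨h1, h2, h3, h4⟩; exact ⟨by omega, h2, h3⟩
      · rintro ⟨h1, h2, h3⟩; exact ⟨by omega, h2, h3, by omega⟩
    rw [e1, e2, eVal]
  · rw [Finset.disjoint_left]
    rintro x hx1 hx2
    rw [mem_filter] at hx1 hx2
    exact hx1.2.1 hx2.2.1

lemma cnt_ins {M : ℕ} (p : Fin (M+1)) (τ : Equiv.Perm (Fin M)) (hM : 1 ≤ M) :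
    cnt (ins p τ) = cnt τ + eVal τ p := by
  rw [cnt_ins_card p τ hM]
  have hsplit : ∀ i, ((Ap τ i ∨ (p : ℕ) = i) ∧ (Bp τ i ∨ (p : ℕ) = i + 1)) ↔
      ((Ap τ i ∧ Bp τ i) ∨
        ((¬ Ap τ i ∧ Bp τ i ∧ (p : ℕ) = i) ∨ (Ap τ i ∧ ¬ Bp τ i ∧ (p : ℕ) = i + 1))) := by
    intro i
    have hne : ¬ ((p : ℕ) = i ∧ (p : ℕ) = i + 1) := by omega
    tauto
  rw [Finset.filter_congr (fun i _ => hsplit i), Finset.filter_or,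
    Finset.card_union_of_disjoint, card_E τ p hM]
  · congr 1
  · rw [Finset.disjoint_left]
    rintro x hx1 hx2
    rw [mem_filter] at hx1 hx2
    rcases hx2.2 with ⟨h, _, _⟩ | ⟨_, h, _⟩
    · exact h hx1.2.1
    · exact h hx1.2.2

lemma card_eVal_one {M : ℕ} (τ : Equiv.Perm (Fin M)) (hM : 1 ≤ M) :
    ((Finset.univ : Finset (Fin (M+1))).filter fun p => eVal τ p = 1).card =
      ((range M).filter fun i => Ap τ i ∧ ¬ Bp τ i).card +
      ((range M).filter fun i => ¬ Ap τ i ∧ Bp τ i).card := by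
  have hiff : ∀ p : Fin (M+1), eVal τ p = 1 ↔
      (((p : ℕ) < M ∧ ¬ Ap τ (p : ℕ) ∧ Bp τ (p : ℕ)) ∨
       (1 ≤ (p : ℕ) ∧ Ap τ ((p : ℕ) - 1) ∧ ¬ Bp τ ((p : ℕ) - 1))) := by
    intro p
    unfold eVal
    split_ifs with h1 h2
    · exact absurd ⟨h1, h2⟩ (excl τ p)
    · simp [h1]
    · simp only [zero_add]
      constructor
      · intro _; right; assumption
      · intro _; trivial
    · constructor
      · intro h; omega
      · rintro (h | h) <;> [exact absurd h h1; exact absurd h ‹¬_›]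
  rw [Finset.filter_congr (fun p _ => hiff p), Finset.filter_or,
    Finset.card_union_of_disjoint]
  · have e1 : ((Finset.univ : Finset (Fin (M+1))).filter fun p : Fin (M+1) =>
        (p : ℕ) < M ∧ ¬ Ap τ (p : ℕ) ∧ Bp τ (p : ℕ)).card =
        ((range M).filter fun i => ¬ Ap τ i ∧ Bp τ i).card := by
      apply Finset.card_nbij' (fun p : Fin (M+1) => (p : ℕ))
        (fun i => (⟨i % (M+1), Nat.mod_lt _ (by omega)⟩ : Fin (M+1)))
      · intro p hp
        rw [Finset.mem_coe, mem_filter] at hp ⊢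
        exact ⟨mem_range.mpr hp.2.1, hp.2.2⟩
      · intro i hi
        rw [Finset.mem_coe, mem_filter, mem_range] at hi
        rw [Finset.mem_coe, mem_filter]
        have hmod : i % (M+1) = i := Nat.mod_eq_of_lt (by omega)
        refine ⟨Finset.mem_univ _, ?_⟩
        simp only [hmod]
        exact ⟨hi.1, hi.2⟩
      · intro p _
        exact Fin.ext (Nat.mod_eq_of_lt p.isLt)
      · intro i hi
        rw [Finset.mem_coe, mem_filter, mem_range] at hi
        exact Nat.mod_eq_of_lt (by omega)
    have e2 : ((Finset.univ : Finset (Fin (M+1))).filter fun p : Fin (M+1) =>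
        1 ≤ (p : ℕ) ∧ Ap τ ((p : ℕ) - 1) ∧ ¬ Bp τ ((p : ℕ) - 1)).card =
        ((range M).filter fun i => Ap τ i ∧ ¬ Bp τ i).card := by
      apply Finset.card_nbij' (fun p : Fin (M+1) => (p : ℕ) - 1)
        (fun i => (⟨(i + 1) % (M+1), Nat.mod_lt _ (by omega)⟩ : Fin (M+1)))
      · intro p hp
        simp only [Finset.mem_coe, mem_filter] at hp ⊢
        have := p.isLt
        exact ⟨mem_range.mpr (by omega), hp.2.2⟩
      · intro i hi
        rw [Finset.mem_coe, mem_filter, mem_range] at hi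
        rw [Finset.mem_coe, mem_filter]
        have hmod : (i + 1) % (M+1) = i + 1 := Nat.mod_eq_of_lt (by omega)
        refine ⟨Finset.mem_univ _, ?_⟩
        simp only [hmod, Nat.add_sub_cancel]
        exact ⟨by omega, hi.2⟩
      · intro p hp
        rw [Finset.mem_coe, mem_filter] at hp
        apply Fin.ext
        have := p.isLt
        simp only []
        have e : (p : ℕ) - 1 + 1 = (p : ℕ) := by omega
        rw [e]
        exact Nat.mod_eq_of_lt p.isLt
      · intro i hi
        rw [Finset.mem_coe, mem_filter, mem_range] at hi
        have hmod : (i + 1) % (M+1) = i + 1 := Nat.mod_eq_of_lt (by omega)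
        simp only [hmod, Nat.add_sub_cancel]
    rw [e1, e2]
    omega
  · rw [Finset.disjoint_left]
    rintro p hp1 hp2
    rw [mem_filter] at hp1 hp2
    exact excl τ p ⟨hp1.2, hp2.2⟩

lemma card_eVal_zero {M : ℕ} (τ : Equiv.Perm (Fin M)) (hM : 1 ≤ M) :
    ((Finset.univ : Finset (Fin (M+1))).filter fun p => eVal τ p = 0).card = 2 * cnt τ := by
  have h1 := card_eVal_one τ hM
  have h2 := key_count τ hM
  have h3 : ((Finset.univ : Finset (Fin (M+1))).filter fun p => eVal τ p = 0).card +
      ((Finset.univ : Finset (Fin (M+1))).filter fun p => eVal τ p = 1).card =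
      M + 1 := by
    have := Finset.card_filter_add_card_filter_not
      (s := (Finset.univ : Finset (Fin (M+1)))) (fun p => eVal τ p = 0)
    rw [Finset.card_univ, Fintype.card_fin] at this
    have hcongr : ((Finset.univ : Finset (Fin (M+1))).filter fun p => ¬ eVal τ p = 0).card =
        ((Finset.univ : Finset (Fin (M+1))).filter fun p => eVal τ p = 1).card := by
      congr 1
      apply Finset.filter_congr
      intro p _
      have := eVal_le_one τ p
      constructor <;> intro h <;> omega
    omega
  omega

lemma two_cnt_le {M : ℕ} (τ : Equiv.Perm (Fin M)) (hM : 1 ≤ M) : 2 * cnt τ ≤ M + 1 := by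
  have := key_count τ hM
  omega

lemma fiber_card {M : ℕ} (τ : Equiv.Perm (Fin M)) (hM : 1 ≤ M) (k' : ℤ) :
    ((Finset.univ : Finset (Fin (M+1))).filter fun p => (cnt (ins p τ) : ℤ) = k').card
      = if (cnt τ : ℤ) = k' then 2 * cnt τ
        else if (cnt τ : ℤ) = k' - 1 then M + 1 - 2 * cnt τ else 0 := by
  have hrw : ∀ p : Fin (M+1), ((cnt (ins p τ) : ℤ) = k') ↔ ((cnt τ : ℤ) + eVal τ p = k') := by
    intro p
    rw [cnt_ins p τ hM]
    push_cast
    constructor <;> intro h <;> omega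
  by_cases h1 : (cnt τ : ℤ) = k'
  · rw [if_pos h1]
    rw [Finset.filter_congr (fun p _ => by
      rw [hrw p]
      have := eVal_le_one τ p
      constructor <;> intro h <;> omega : ∀ p ∈ Finset.univ,
        ((cnt (ins p τ) : ℤ) = k') ↔ (eVal τ p = 0))]
    exact card_eVal_zero τ hM
  · rw [if_neg h1]
    by_cases h2 : (cnt τ : ℤ) = k' - 1
    · rw [if_pos h2]
      rw [Finset.filter_congr (fun p _ => by
        rw [hrw p]
        have := eVal_le_one τ p
        constructor <;> intro h <;> omega : ∀ p ∈ Finset.univ,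
          ((cnt (ins p τ) : ℤ) = k') ↔ (eVal τ p = 1))]
      rw [card_eVal_one τ hM]
      have := key_count τ hM
      omega
    · rw [if_neg h2]
      rw [Finset.card_eq_zero, Finset.eq_empty_iff_forall_notMem]
      intro p hp
      rw [mem_filter, hrw p] at hp
      have := eVal_le_one τ p
      interval_cases h : eVal τ p <;> omega

lemma main_identity {M : ℕ} (hM : 2 ≤ M) (k : ℤ) :
    (numPermsWithLocalMins (M+1) k : ℤ) =
      2 * k * (numPermsWithLocalMins M k : ℤ) +
        ((M : ℤ) + 3 - 2 * k) * (numPermsWithLocalMins M (k - 1) : ℤ) := by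
  have hM1 : 1 ≤ M := by omega
  rw [numPerms_eq (by omega : 2 ≤ M + 1) k, numPerms_eq hM k, numPerms_eq hM (k - 1)]
  have hbij := ins_bijective M
  have hstep1 : (Finset.univ.filter fun σ : Equiv.Perm (Fin (M+1)) => (cnt σ : ℤ) = k).card
      = (Finset.univ.filter fun x : Fin (M+1) × Equiv.Perm (Fin M) =>
          (cnt (ins x.1 x.2) : ℤ) = k).card := by
    apply Finset.card_equiv (Equiv.ofBijective _ hbij).symm
    intro σ
    simp only [Finset.mem_filter, Finset.mem_univ, true_and]
    have hfix : ins ((Equiv.ofBijective _ hbij).symm σ).1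
        ((Equiv.ofBijective _ hbij).symm σ).2 = σ :=
      Equiv.apply_symm_apply (Equiv.ofBijective _ hbij) σ
    rw [hfix]
  have hstep2 : (Finset.univ.filter fun x : Fin (M+1) × Equiv.Perm (Fin M) =>
      (cnt (ins x.1 x.2) : ℤ) = k).card
      = ∑ τ : Equiv.Perm (Fin M),
          ((Finset.univ : Finset (Fin (M+1))).filter fun p => (cnt (ins p τ) : ℤ) = k).card := by
    rw [Finset.card_eq_sum_card_fiberwise
      (f := Prod.snd) (t := Finset.univ) (fun x _ => Finset.mem_univ _)]
    apply Finset.sum_congr rfl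
    intro τ _
    apply Finset.card_nbij' (fun x => x.1) (fun p => (p, τ))
    · intro x hx
      rw [Finset.mem_coe, Finset.mem_filter] at hx
      obtain ⟨hx1, hx2⟩ := hx
      simp only [Finset.mem_coe, Finset.mem_filter] at hx1 ⊢
      refine ⟨Finset.mem_univ _, ?_⟩
      rw [← hx2]
      exact hx1.2
    · intro p hp
      rw [Finset.mem_coe, Finset.mem_filter] at hp ⊢
      exact ⟨Finset.mem_filter.mpr ⟨Finset.mem_univ _, hp.2⟩, rfl⟩
    · intro x hx
      rw [Finset.mem_coe, Finset.mem_filter] at hx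
      obtain ⟨a, b⟩ := x
      simp only at hx ⊢
      rw [hx.2]
    · intro p _
      rfl
  rw [hstep1, hstep2]
  push_cast
  set G : Equiv.Perm (Fin M) → ℤ := fun τ =>
    if (cnt τ : ℤ) = k then 2 * k else if (cnt τ : ℤ) = k - 1 then (M : ℤ) + 3 - 2 * k else 0
    with hG
  have hsummand : ∀ τ : Equiv.Perm (Fin M),
      (((Finset.univ : Finset (Fin (M+1))).filter
          fun p => (cnt (ins p τ) : ℤ) = k).card : ℤ) = G τ := by
    intro τ
    rw [fiber_card τ hM1 k, hG]
    have h2c := two_cnt_le τ hM1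
    split_ifs with h1 h2 <;> push_cast <;> omega
  rw [Finset.sum_congr rfl (fun τ _ => hsummand τ)]
  rw [← Finset.sum_filter_add_sum_filter_not Finset.univ (fun τ => (cnt τ : ℤ) = k) G]
  have hs1 : ∑ τ ∈ Finset.univ.filter (fun τ : Equiv.Perm (Fin M) => (cnt τ : ℤ) = k), G τ
      = 2 * k * (Finset.univ.filter fun τ : Equiv.Perm (Fin M) => (cnt τ : ℤ) = k).card := by
    rw [Finset.sum_congr rfl (fun τ hτ => by
      rw [hG]
      simp only
      rw [if_pos (Finset.mem_filter.mp hτ).2] : ∀ τ ∈ Finset.univ.filter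
        (fun τ : Equiv.Perm (Fin M) => (cnt τ : ℤ) = k), G τ = 2 * k)]
    rw [Finset.sum_const, nsmul_eq_mul]
    ring
  have hs2 : ∑ τ ∈ Finset.univ.filter (fun τ : Equiv.Perm (Fin M) => ¬ (cnt τ : ℤ) = k), G τ
      = ((M : ℤ) + 3 - 2 * k) *
        (Finset.univ.filter fun τ : Equiv.Perm (Fin M) => (cnt τ : ℤ) = k - 1).card := by
    rw [Finset.sum_congr rfl (fun τ hτ => by
      rw [hG]
      simp only
      rw [if_neg (Finset.mem_filter.mp hτ).2] : ∀ τ ∈ Finset.univ.filter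
        (fun τ : Equiv.Perm (Fin M) => ¬ (cnt τ : ℤ) = k),
          G τ = if (cnt τ : ℤ) = k - 1 then (M : ℤ) + 3 - 2 * k else 0)]
    rw [← Finset.sum_filter]
    rw [Finset.filter_filter]
    rw [Finset.filter_congr (fun τ _ => by
      constructor
      · rintro ⟨_, h⟩; exact h
      · intro h; exact ⟨by omega, h⟩ : ∀ τ ∈ (Finset.univ : Finset (Equiv.Perm (Fin M))),
        ((¬ (cnt τ : ℤ) = k) ∧ (cnt τ : ℤ) = k - 1) ↔ ((cnt τ : ℤ) = k - 1))]
    rw [Finset.sum_const, nsmul_eq_mul]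
    ring
  rw [hs1, hs2]

lemma cnt_two : ∀ σ : Equiv.Perm (Fin 2), cnt σ = 1 := by decide

lemma numPerms_two (k : ℤ) : numPermsWithLocalMins 2 k = if k = 1 then 2 else 0 := by
  rw [numPerms_eq (le_refl 2) k]
  by_cases hk : k = 1
  · subst hk
    rw [if_pos rfl]
    rw [Finset.filter_true_of_mem (fun σ _ => show ((cnt σ : ℤ) = 1) by rw [cnt_two σ]; norm_num)]
    rw [Finset.card_univ, Fintype.card_perm]
    simp [Nat.factorial]
  · rw [if_neg hk, Finset.card_eq_zero, Finset.eq_empty_iff_forall_notMem]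
    intro σ hσ
    rw [Finset.mem_filter, cnt_two σ] at hσ
    have h1 : (1 : ℤ) = k := by exact_mod_cast hσ.2
    exact hk h1.symm

/-- `p(n, k) = P(R_n = k) = m(n-1, k)/(n-1)!`, the probability that a uniformly random
permutation of `{1, …, n-1}` has exactly `k` local minima, with the conventions
`p(1,0) = p(2,1) = 1`. -/
noncomputable def pR (n : ℕ) (k : ℤ) : ℚ :=
  if n ≤ 2 then (if k = (n : ℤ) - 1 then 1 else 0)
  else (numPermsWithLocalMins (n - 1) k : ℚ) / (Nat.factorial (n - 1))

/-- For `n ≥ 2`: `p(n+1,k) = (2k/n)·p(n,k) + ((n-2k+2)/n)·p(n,k-1)`. -/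
theorem pR_recurrence (n : ℕ) (hn : 2 ≤ n) (k : ℤ) :
    pR (n + 1) k =
      (2 * (k : ℚ) / (n : ℚ)) * pR n k +
        (((n : ℚ) - 2 * (k : ℚ) + 2) / (n : ℚ)) * pR n (k - 1) := by
  rcases eq_or_lt_of_le hn with h2 | h3
  · -- n = 2
    subst h2
    have e3 : pR 3 k = (numPermsWithLocalMins 2 k : ℚ) / 2 := by
      unfold pR
      norm_num [Nat.factorial]
    have e2 : ∀ j : ℤ, pR 2 j = if j = 1 then (1:ℚ) else 0 := by
      intro j
      unfold pR
      norm_num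
    show pR (2+1) k = _
    rw [(by norm_num : (2:ℕ)+1 = 3), e3, e2, e2, numPerms_two]
    by_cases hk1 : k = 1
    · subst hk1; norm_num
    · by_cases hk2 : k = 2
      · subst hk2; norm_num
      · rw [if_neg hk1, if_neg hk1, if_neg (by omega : ¬ k - 1 = 1)]
        norm_num
  · -- n ≥ 3
    obtain ⟨M, rfl⟩ : ∃ M, n = M + 1 := ⟨n - 1, by omega⟩
    have hM : 2 ≤ M := by omega
    have key := main_identity hM k
    rw [pR, pR, pR, if_neg (by omega), if_neg (by omega), if_neg (by omega)]
    simp only [Nat.add_sub_cancel]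
    have hb : ((numPermsWithLocalMins (M+1) k : ℚ)) =
        2 * (k : ℚ) * (numPermsWithLocalMins M k : ℚ) +
          ((M : ℚ) + 3 - 2 * (k : ℚ)) * (numPermsWithLocalMins M (k - 1) : ℚ) := by
      exact_mod_cast key
    rw [hb]
    have hfac : (Nat.factorial (M+1) : ℚ) = ((M : ℚ) + 1) * (Nat.factorial M : ℚ) := by
      rw [Nat.factorial_succ]; push_cast; ring
    rw [hfac]
    have h1 : (Nat.factorial M : ℚ) ≠ 0 := by
      exact_mod_cast Nat.factorial_ne_zero M
    have h2 : ((M : ℚ) + 1) ≠ 0 := by positivity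
    push_cast
    field_simp
    ring_nf
end

section
/- Let U_1,…,U_n be i.i.d. uniform on (0,1), n ≥ 3, with order statistics U_{(1)}<…<U_{(n)} and spacings D_i = U_{(i+1)} − U_{(i)}. Then almost surely, the number of reflexive nearest-neighbor pairs equals 1_{D_1<D_2} + Σ_{i=2}^{n-2} 1_{D_i<min(D_{i-1},D_{i+1})} + 1_{D_{n-1}<D_{n-2}}. -/
open MeasureTheory ProbabilityTheory

/-- `j` is a nearest neighbor of `i` among the points `x : Fin n → ℝ`. -/
abbrev isNN {n : ℕ} (x : Fin n → ℝ) (i j : Fin n) : Prop :=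
  i ≠ j ∧ ∀ k : Fin n, k ≠ i → |x i - x j| ≤ |x i - x k|

/-- The number of reflexive nearest-neighbor pairs among the points `x`. -/
noncomputable def reflPairs (n : ℕ) (x : Fin n → ℝ) : ℕ :=
  (Finset.univ.filter fun p : Fin n × Fin n =>
    p.1 < p.2 ∧ isNN x p.1 p.2 ∧ isNN x p.2 p.1).card

/-- The `i`-th order statistic (1-based) of the points `x`. -/
noncomputable def orderStat (n : ℕ) (x : Fin n → ℝ) (i : ℕ) : ℝ :=
  ((Finset.univ.image x).sort (· ≤ ·)).getD (i - 1) 0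

/-- The `i`-th spacing `D_i = U_{(i+1)} − U_{(i)}` of the points `x`. -/
noncomputable def spacing (n : ℕ) (x : Fin n → ℝ) (i : ℕ) : ℝ :=
  orderStat n x (i + 1) - orderStat n x i


private lemma null_lin {Ω : Type*} [MeasureSpace Ω] [IsProbabilityMeasure (ℙ : Measure Ω)]
    {X W : Ω → ℝ} (c : ℝ) (hc : c ≠ 0) (hX : Measurable X) (hW : Measurable W)
    (hInd : IndepFun W X ℙ)
    (hXlaw : Measure.map X ℙ = volume.restrict (Set.Ioo (0 : ℝ) 1)) :
    (ℙ : Measure Ω) {ω | c * X ω = W ω} = 0 := by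
  have hsing : ∀ y : ℝ, Measure.map X ℙ {y} = 0 := by
    intro y
    rw [hXlaw, Measure.restrict_apply (measurableSet_singleton y)]
    exact measure_mono_null Set.inter_subset_left Real.volume_singleton
  set s : Set (ℝ × ℝ) := {p | c * p.2 = p.1} with hs
  have hsm : MeasurableSet s :=
    measurableSet_eq_fun (by fun_prop) measurable_fst
  have hmap : Measure.map (fun ω => (W ω, X ω)) ℙ = (Measure.map W ℙ).prod (Measure.map X ℙ) :=
    (indepFun_iff_map_prod_eq_prod_map_map hW.aemeasurable hX.aemeasurable).mp hInd
  have h1 : (ℙ : Measure Ω) {ω | c * X ω = W ω}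
      = Measure.map (fun ω => (W ω, X ω)) ℙ s := by
    rw [Measure.map_apply (hW.prodMk hX) hsm]
    rfl
  rw [h1, hmap, Measure.prod_apply hsm]
  have h2 : ∀ v : ℝ, (Prod.mk v ⁻¹' s) = {v / c} := by
    intro v
    ext y
    simp only [hs, Set.mem_preimage, Set.mem_setOf_eq, Set.mem_singleton_iff,
      eq_div_iff hc]
    constructor <;> intro h <;> linarith [mul_comm c y]
  simp only [h2, hsing, lintegral_zero]


theorem key (n : ℕ) (hn : 3 ≤ n) (x : Fin n → ℝ) (hinj : Function.Injective x)
    (hrel : ∀ i j k : Fin n, j ≠ i → k ≠ i → j ≠ k → 2 * x i ≠ x j + x k) :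
    reflPairs n x =
      (if spacing n x 1 < spacing n x 2 then 1 else 0) +
        (∑ i ∈ Finset.Icc 2 (n - 2),
          if spacing n x i < min (spacing n x (i - 1)) (spacing n x (i + 1)) then 1 else 0) +
        (if spacing n x (n - 1) < spacing n x (n - 2) then 1 else 0) := by
  classical
  set L := ((Finset.univ.image x).sort (· ≤ ·)) with hL
  have hlen : L.length = n := by
    rw [hL, Finset.length_sort, Finset.card_image_of_injective _ hinj, Finset.card_univ,
      Fintype.card_fin]
  have hnd : L.Nodup := Finset.sort_nodup _ _
  have hslt : L.Pairwise (· < ·) := (Finset.sortedLT_sort _).pairwise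
  set w : ℕ → ℝ := fun m => L.getD m 0 with hwdef
  have hwget : ∀ m (hm : m < n), w m = L.get ⟨m, hlen ▸ hm⟩ := fun m hm =>
    List.getD_eq_get L 0 ⟨m, hlen ▸ hm⟩
  have hw_mono : ∀ a b, a < b → b < n → w a < w b := by
    intro a b hab hbn
    rw [hwget a (hab.trans hbn), hwget b hbn]
    exact hslt.rel_get_of_lt (by simpa using hab)
  have hmem : ∀ i, x i ∈ L := fun i => by
    rw [hL, Finset.mem_sort]; exact Finset.mem_image_of_mem x (Finset.mem_univ i)
  set r : Fin n → ℕ := fun i => L.idxOf (x i) with hrdef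
  have hr_lt : ∀ i, r i < n := fun i => hlen ▸ List.idxOf_lt_length_iff.2 (hmem i)
  have hw_r : ∀ i, w (r i) = x i := fun i => by
    rw [hwget _ (hr_lt i)]; exact List.idxOf_get _
  have hr_inj : Function.Injective r := fun i j h => by
    apply hinj; rw [← hw_r i, ← hw_r j, h]
  have hr_surj : ∀ m, m < n → ∃ i, r i = m := by
    intro m hm
    have hmem' : w m ∈ L := by rw [hwget m hm]; exact List.get_mem _ _
    rw [hL, Finset.mem_sort, Finset.mem_image] at hmem'
    obtain ⟨i, -, hi⟩ := hmem'
    refine ⟨i, ?_⟩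
    show L.idxOf (x i) = m
    rw [hi, hwget m hm]
    exact List.get_idxOf hnd _
  set D : ℕ → ℝ := fun m => w (m + 1) - w m with hDdef
  have hspac : ∀ i, 1 ≤ i → spacing n x i = D (i - 1) := by
    intro i hi
    obtain ⟨i', rfl⟩ : ∃ i', i = i' + 1 := ⟨i - 1, by omega⟩
    simp [spacing, orderStat, hDdef, hwdef, ← hL]
  have hdist_ge_left : ∀ a b, a + 1 ≤ b → b < n → D a ≤ w b - w a := by
    intro a b hab hbn
    rcases eq_or_lt_of_le hab with h | h
    · simp [hDdef, ← h]
    · have := hw_mono (a + 1) b h hbn; simp only [hDdef]; linarith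
  have hdist_ge_right : ∀ a b, a + 1 ≤ b → b < n → D (b - 1) ≤ w b - w a := by
    intro a b hab hbn
    obtain ⟨b', rfl⟩ : ∃ b', b = b' + 1 := ⟨b - 1, by omega⟩
    simp only [Nat.add_sub_cancel, hDdef]
    have : a ≤ b' := by omega
    rcases this.lt_or_eq with h' | rfl
    · have := hw_mono a b' h' (by omega); linarith
    · linarith
  have hgapne : ∀ m, m + 2 < n → D m ≠ D (m + 1) := by
    intro m hm h
    obtain ⟨i, hi⟩ := hr_surj (m + 1) (by omega)
    obtain ⟨j, hj⟩ := hr_surj m (by omega)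
    obtain ⟨k, hk⟩ := hr_surj (m + 2) (by omega)
    refine hrel i j k ?_ ?_ ?_ ?_
    · intro e; rw [e, hi] at hj; omega
    · intro e; rw [e, hi] at hk; omega
    · intro e; rw [e, hk] at hj; omega
    · rw [← hw_r i, ← hw_r j, ← hw_r k, hi, hj, hk]
      simp only [hDdef] at h; linarith
  have habs : ∀ a b, a < b → b < n → |w a - w b| = w b - w a := by
    intro a b hab hbn
    rw [abs_sub_comm, abs_of_pos (sub_pos.2 (hw_mono a b hab hbn))]
  set P : ℕ → Prop := fun a => (a = 0 ∨ D a < D (a - 1)) ∧ (a + 2 = n ∨ D a < D (a + 1))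
    with hPdef
  -- the characterization
  have hchar : ∀ i j : Fin n, r i + 1 ≤ r j →
      ((isNN x i j ∧ isNN x j i) ↔ (r j = r i + 1 ∧ P (r i))) := by
    intro i j hij
    have hrin : r i < n := hr_lt i
    have hrjn : r j < n := hr_lt j
    have habsij : |x i - x j| = w (r j) - w (r i) := by
      rw [← hw_r i, ← hw_r j]; exact habs _ _ (by omega) hrjn
    have habsji : |x j - x i| = w (r j) - w (r i) := by rw [abs_sub_comm]; exact habsij
    constructor
    · rintro ⟨⟨hne, hNNi⟩, ⟨-, hNNj⟩⟩
      have hb : r j = r i + 1 := by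
        by_contra hb
        have h2 : r i + 2 ≤ r j := by omega
        obtain ⟨k, hk⟩ := hr_surj (r i + 1) (by omega)
        have hki : k ≠ i := fun e => by rw [e] at hk; omega
        have hle := hNNi k hki
        rw [habsij, ← hw_r i, ← hw_r k, hk, habs _ _ (by omega) (by omega)] at hle
        have := hw_mono (r i + 1) (r j) (by omega) hrjn
        linarith
      refine ⟨hb, ?_, ?_⟩
      · rcases Nat.eq_zero_or_pos (r i) with h0 | h0
        · exact Or.inl h0
        · right
          obtain ⟨k, hk⟩ := hr_surj (r i - 1) (by omega)
          have hki : k ≠ i := fun e => by rw [e] at hk; omega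
          have hle := hNNi k hki
          rw [habsij, ← hw_r i, ← hw_r k, hk, abs_sub_comm,
            habs _ _ (by omega) hrin] at hle
          have hD : w (r j) - w (r i) = D (r i) := by
            simp only [hDdef]; rw [hb]
          have hD' : w (r i) - w (r i - 1) = D (r i - 1) := by
            simp only [hDdef]
            congr 2; omega
          rw [hD, hD'] at hle
          refine lt_of_le_of_ne hle ?_
          have := hgapne (r i - 1) (by omega)
          rw [(by omega : r i - 1 + 1 = r i)] at this
          exact fun e => this e.symm
      · rcases eq_or_ne (r i + 2) n with h0 | h0
        · exact Or.inl h0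
        · right
          obtain ⟨k, hk⟩ := hr_surj (r j + 1) (by omega)
          have hkj : k ≠ j := fun e => by rw [e] at hk; omega
          have hle := hNNj k hkj
          rw [habsji, ← hw_r j, ← hw_r k, hk, habs _ _ (by omega) (by omega)] at hle
          have hD : w (r j) - w (r i) = D (r i) := by simp only [hDdef]; rw [hb]
          have hD' : w (r j + 1) - w (r j) = D (r i + 1) := by
            simp only [hDdef]; rw [hb]
          rw [hD, hD'] at hle
          exact lt_of_le_of_ne hle (hgapne (r i) (by omega))
    · rintro ⟨hb, hP1, hP2⟩
      have hne : i ≠ j := fun e => by rw [e] at hij; omega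
      have hDij : |x i - x j| = D (r i) := by rw [habsij]; simp only [hDdef]; rw [hb]
      refine ⟨⟨hne, ?_⟩, hne.symm, ?_⟩
      · intro k hki
        rw [hDij, ← hw_r i, ← hw_r k]
        have hrki : r k ≠ r i := fun e => hki (hr_inj e)
        rcases lt_or_gt_of_ne hrki with h | h
        · rw [abs_sub_comm, habs _ _ h hrin]
          have h1 : D (r i - 1) ≤ w (r i) - w (r k) := hdist_ge_right _ _ (by omega) hrin
          have h2 : D (r i) < D (r i - 1) := by
            rcases hP1 with h0 | h0
            · omega
            · exact h0
          linarith
        · rw [habs _ _ h (hr_lt k)]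
          exact hdist_ge_left _ _ (by omega) (hr_lt k)
      · intro k hkj
        rw [habsji]
        have hD : w (r j) - w (r i) = D (r i) := by simp only [hDdef]; rw [hb]
        rw [hD, ← hw_r j, ← hw_r k]
        have hrkj : r k ≠ r j := fun e => hkj (hr_inj e)
        rcases lt_or_gt_of_ne hrkj with h | h
        · rw [abs_sub_comm, habs _ _ h hrjn]
          have h1 : D (r j - 1) ≤ w (r j) - w (r k) := hdist_ge_right _ _ (by omega) hrjn
          rwa [(by omega : r j - 1 = r i)] at h1
        · rw [habs _ _ h (hr_lt k)]
          have h1 : D (r j) ≤ w (r k) - w (r j) := hdist_ge_left _ _ (by omega) (hr_lt k)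
          have h2 : D (r i) < D (r i + 1) := by
            rcases hP2 with h0 | h0
            · exfalso; have := hr_lt k; omega
            · exact h0
          have h3 : D (r j) = D (r i + 1) := by rw [hb]
          linarith
  -- counting
  set T : Finset ℕ := (Finset.range (n - 1)).filter P with hT
  have hcard : reflPairs n x = T.card := by
    rw [reflPairs]
    refine Finset.card_bij (fun p _ => min (r p.1) (r p.2)) ?_ ?_ ?_
    · rintro p hp
      rw [Finset.mem_filter] at hp
      obtain ⟨-, hlt, hnn⟩ := hp
      have hne : r p.1 ≠ r p.2 := fun e => absurd (hr_inj e) (Fin.ne_of_lt hlt)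
      rw [hT, Finset.mem_filter, Finset.mem_range]
      show min (r p.1) (r p.2) < n - 1 ∧ P (min (r p.1) (r p.2))
      rcases lt_or_gt_of_ne hne with h | h
      · obtain ⟨hb, hP⟩ := (hchar p.1 p.2 (by omega)).1 hnn
        rw [min_eq_left h.le]
        exact ⟨by have := hr_lt p.2; omega, hP⟩
      · obtain ⟨hb, hP⟩ := (hchar p.2 p.1 (by omega)).1 ⟨hnn.2, hnn.1⟩
        rw [min_eq_right h.le]
        exact ⟨by have := hr_lt p.1; omega, hP⟩
    · rintro p hp q hq hpq
      rw [Finset.mem_filter] at hp hq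
      obtain ⟨-, hltp, hnnp⟩ := hp
      obtain ⟨-, hltq, hnnq⟩ := hq
      have hnep : r p.1 ≠ r p.2 := fun e => absurd (hr_inj e) (Fin.ne_of_lt hltp)
      have hneq : r q.1 ≠ r q.2 := fun e => absurd (hr_inj e) (Fin.ne_of_lt hltq)
      have hp' : (r p.1 = min (r p.1) (r p.2) ∧ r p.2 = min (r p.1) (r p.2) + 1) ∨
          (r p.2 = min (r p.1) (r p.2) ∧ r p.1 = min (r p.1) (r p.2) + 1) := by
        rcases lt_or_gt_of_ne hnep with h | h
        · obtain ⟨hb, -⟩ := (hchar p.1 p.2 (by omega)).1 hnnp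
          left; omega
        · obtain ⟨hb, -⟩ := (hchar p.2 p.1 (by omega)).1 ⟨hnnp.2, hnnp.1⟩
          right; omega
      have hq' : (r q.1 = min (r q.1) (r q.2) ∧ r q.2 = min (r q.1) (r q.2) + 1) ∨
          (r q.2 = min (r q.1) (r q.2) ∧ r q.1 = min (r q.1) (r q.2) + 1) := by
        rcases lt_or_gt_of_ne hneq with h | h
        · obtain ⟨hb, -⟩ := (hchar q.1 q.2 (by omega)).1 hnnq
          left; omega
        · obtain ⟨hb, -⟩ := (hchar q.2 q.1 (by omega)).1 ⟨hnnq.2, hnnq.1⟩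
          right; omega
      have key2 : ∀ a b : Fin n, r a = r b → a = b := fun a b e => hr_inj e
      rcases hp' with ⟨h1, h2⟩ | ⟨h1, h2⟩ <;> rcases hq' with ⟨h3, h4⟩ | ⟨h3, h4⟩
      · exact Prod.ext (key2 _ _ (by omega)) (key2 _ _ (by omega))
      · exfalso
        have e1 : p.1 = q.2 := key2 _ _ (by omega)
        have e2 : p.2 = q.1 := key2 _ _ (by omega)
        rw [e1, e2] at hltp
        exact absurd hltq (not_lt.2 hltp.le)
      · exfalso
        have e1 : p.1 = q.2 := key2 _ _ (by omega)
        have e2 : p.2 = q.1 := key2 _ _ (by omega)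
        rw [e1, e2] at hltp
        exact absurd hltq (not_lt.2 hltp.le)
      · exact Prod.ext (key2 _ _ (by omega)) (key2 _ _ (by omega))
    · rintro a ha
      rw [hT, Finset.mem_filter, Finset.mem_range] at ha
      obtain ⟨han, hPa⟩ := ha
      obtain ⟨i, hi⟩ := hr_surj a (by omega)
      obtain ⟨j, hj⟩ := hr_surj (a + 1) (by omega)
      have hnn := (hchar i j (by omega)).2 ⟨by omega, hi ▸ hPa⟩
      have hij : i ≠ j := fun e => by rw [e, hj] at hi; omega
      rcases hij.lt_or_gt with h | h
      · exact ⟨(i, j), Finset.mem_filter.2 ⟨Finset.mem_univ _, h, hnn⟩, by simp [hi, hj]⟩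
      · exact ⟨(j, i), Finset.mem_filter.2 ⟨Finset.mem_univ _, h, hnn.2, hnn.1⟩,
          by simp [hi, hj]⟩
  rw [hcard]
  -- now compute T.card
  have hsplit : Finset.range (n - 1) = insert 0 (insert (n - 2) (Finset.Icc 1 (n - 3))) := by
    ext a; simp; omega
  rw [hT, Finset.card_filter, hsplit]
  rw [Finset.sum_insert (by simp; omega), Finset.sum_insert (by simp; omega)]
  have hPmid : ∀ a, 1 ≤ a → a + 2 < n → (P a ↔ D a < min (D (a - 1)) (D (a + 1))) := by
    intro a h1 h2
    rw [lt_min_iff]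
    constructor
    · rintro ⟨hx | hx, hy | hy⟩
      · exact absurd hx (by omega)
      · exact absurd hx (by omega)
      · exact absurd hy (by omega)
      · exact ⟨hx, hy⟩
    · rintro ⟨hx, hy⟩; exact ⟨Or.inr hx, Or.inr hy⟩
  have h0 : (if P 0 then 1 else 0) = (if spacing n x 1 < spacing n x 2 then 1 else 0) := by
    have hiff : P 0 ↔ spacing n x 1 < spacing n x 2 := by
      rw [hspac 1 le_rfl, hspac 2 (by omega)]
      constructor
      · rintro ⟨-, h | h⟩
        · exact absurd h (by omega)
        · exact h
      · intro h; exact ⟨Or.inl rfl, Or.inr h⟩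
    simp only [hiff]
  have hlast : (if P (n - 2) then 1 else 0) =
      (if spacing n x (n - 1) < spacing n x (n - 2) then 1 else 0) := by
    have hiff : P (n - 2) ↔ spacing n x (n - 1) < spacing n x (n - 2) := by
      rw [hspac (n - 1) (by omega), hspac (n - 2) (by omega),
        (by omega : n - 1 - 1 = n - 2), (by omega : n - 2 - 1 = n - 3)]
      constructor
      · rintro ⟨h | h, -⟩
        · exact absurd h (by omega)
        · rwa [(by omega : n - 2 - 1 = n - 3)] at h
      · intro h
        exact ⟨Or.inr (by rwa [(by omega : n - 2 - 1 = n - 3)]), Or.inl (by omega)⟩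
    simp only [hiff]
  have hmid : (∑ a ∈ Finset.Icc 1 (n - 3), if P a then 1 else 0) =
      ∑ i ∈ Finset.Icc 2 (n - 2),
        if spacing n x i < min (spacing n x (i - 1)) (spacing n x (i + 1)) then 1 else 0 := by
    refine Finset.sum_nbij' (fun a => a + 1) (fun i => i - 1) ?_ ?_ ?_ ?_ ?_
    · intro a ha; simp at ha ⊢; omega
    · intro i hi; simp at hi ⊢; omega
    · intro a ha; simp at ha ⊢
    · intro i hi; simp at hi ⊢; omega
    · intro a ha
      simp only [Finset.mem_Icc] at ha
      rw [hspac (a + 1) (by omega), hspac (a + 1 - 1) (by omega), hspac (a + 1 + 1) (by omega)]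
      simp only [Nat.add_sub_cancel]
      simp only [hPmid a (by omega) (by omega)]
  rw [h0, hlast, hmid]
  ring

/-- For i.i.d. `U(0,1)` points `U_1, …, U_n` with `n ≥ 3`, almost surely the number of
reflexive NN pairs equals
`1_{D_1<D_2} + Σ_{i=2}^{n-2} 1_{D_i<min(D_{i-1},D_{i+1})} + 1_{D_{n-1}<D_{n-2}}`. -/
theorem reflPairs_eq_spacing_indicators (n : ℕ) (hn : 3 ≤ n)
    {Ω : Type*} [MeasureSpace Ω] [IsProbabilityMeasure (ℙ : Measure Ω)]
    (U : Fin n → Ω → ℝ) (hmeas : ∀ i, Measurable (U i))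
    (hindep : iIndepFun U ℙ)
    (hunif : ∀ i, Measure.map (U i) ℙ = volume.restrict (Set.Ioo (0 : ℝ) 1)) :
    ∀ᵐ ω ∂ℙ,
      (reflPairs n fun i => U i ω) =
        (if spacing n (fun i => U i ω) 1 < spacing n (fun i => U i ω) 2 then 1 else 0) +
          (∑ i ∈ Finset.Icc 2 (n - 2),
            if spacing n (fun j => U j ω) i <
                min (spacing n (fun j => U j ω) (i - 1)) (spacing n (fun j => U j ω) (i + 1))
              then 1 else 0) +
          (if spacing n (fun i => U i ω) (n - 1) < spacing n (fun i => U i ω) (n - 2)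
            then 1 else 0) := by
  have h1 : ∀ᵐ ω ∂ℙ, ∀ i j : Fin n, i ≠ j → U i ω ≠ U j ω := by
    rw [ae_all_iff]
    intro i
    rw [ae_all_iff]
    intro j
    rcases eq_or_ne i j with rfl | hij
    · exact ae_of_all _ fun ω h => absurd rfl h
    · have h0 : (ℙ : Measure Ω) {ω | (1 : ℝ) * U i ω = U j ω} = 0 :=
        null_lin 1 one_ne_zero (hmeas i) (hmeas j)
          ((hindep.indepFun hij).symm) (hunif i)
      rw [ae_iff]
      refine measure_mono_null (fun ω hω => ?_) h0
      simp only [Set.mem_setOf_eq] at hω ⊢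
      push_neg at hω
      rw [one_mul]
      exact hω.2
  have h2 : ∀ᵐ ω ∂ℙ, ∀ i j k : Fin n, j ≠ i → k ≠ i → j ≠ k →
      2 * U i ω ≠ U j ω + U k ω := by
    rw [ae_all_iff]
    intro i
    rw [ae_all_iff]
    intro j
    rw [ae_all_iff]
    intro k
    rcases eq_or_ne j i with rfl | hji
    · exact ae_of_all _ fun ω h => absurd rfl h
    rcases eq_or_ne k i with rfl | hki
    · exact ae_of_all _ fun ω _ h => absurd rfl h
    rcases eq_or_ne j k with rfl | hjk
    · exact ae_of_all _ fun ω _ _ h => absurd rfl h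
    · have hInd : IndepFun (fun ω => U j ω + U k ω) (U i) ℙ := by
        have := hindep.indepFun_prodMk hmeas j k i hji hki
        exact this.comp (measurable_fst.add measurable_snd) measurable_id
      have h0 : (ℙ : Measure Ω) {ω | (2 : ℝ) * U i ω = U j ω + U k ω} = 0 :=
        null_lin 2 two_ne_zero (hmeas i) ((hmeas j).add (hmeas k)) hInd (hunif i)
      rw [ae_iff]
      refine measure_mono_null (fun ω hω => ?_) h0
      simp only [Set.mem_setOf_eq] at hω ⊢
      push_neg at hω
      exact hω.2.2.2
  filter_upwards [h1, h2] with ω hω1 hω2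
  exact key n hn (fun i => U i ω)
    (fun i j h => by by_contra hne; exact hω1 i j hne h)
    (fun i j k hji hki hjk => hω2 i j k hji hki hjk)
end

section
/- Let U_1,…,U_n be i.i.d. uniform on (0,1), n ≥ 4, with spacings D_i = U_{(i+1)} − U_{(i)} of the order statistics. Then almost surely, the number of shared nearest-neighbor pairs equals 1_{D_2<D_3} + Σ_{i=2}^{n-3} 1_{D_i<D_{i-1}, D_{i+1}<D_{i+2}} + 1_{D_{n-2}<D_{n-3}}. -/
open MeasureTheory ProbabilityTheory

/-- The number of shared nearest-neighbor pairs among the points `x`: pairs of distinct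
points having a common nearest neighbor. -/
noncomputable def sharedNNPairs (n : ℕ) (x : Fin n → ℝ) : ℕ :=
  (Finset.univ.filter fun p : Fin n × Fin n =>
    p.1 < p.2 ∧ ∃ w : Fin n, isNN x p.1 w ∧ isNN x p.2 w).card

lemma eq_null {Ω : Type*} [MeasureSpace Ω] [IsProbabilityMeasure (ℙ : Measure Ω)]
    (X W : Ω → ℝ) (hX : Measurable X) (hW : Measurable W)
    (h : IndepFun X W ℙ) (hatom : ∀ t : ℝ, ℙ {ω | X ω = t} = 0) :
    ℙ {ω | X ω = W ω} = 0 := by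
  have hmap : Measure.map (fun ω => (W ω, X ω)) ℙ = (Measure.map W ℙ).prod (Measure.map X ℙ) :=
    (indepFun_iff_map_prod_eq_prod_map_map hW.aemeasurable hX.aemeasurable).mp h.symm
  have hset : MeasurableSet {p : ℝ × ℝ | p.2 = p.1} :=
    measurableSet_eq_fun measurable_snd measurable_fst
  have hrw : {ω | X ω = W ω} = (fun ω => (W ω, X ω)) ⁻¹' {p : ℝ × ℝ | p.2 = p.1} := rfl
  rw [hrw, ← Measure.map_apply (hW.prodMk hX) hset, hmap, Measure.prod_apply hset]
  have hz : ∀ w : ℝ, (Measure.map X ℙ) {w} = 0 := by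
    intro w
    rw [Measure.map_apply hX (measurableSet_singleton w)]
    exact hatom w
  simp [hz]

lemma aux_null (n : ℕ) {Ω : Type*} [MeasureSpace Ω] [IsProbabilityMeasure (ℙ : Measure Ω)]
    (U : Fin n → Ω → ℝ) (hmeas : ∀ i, Measurable (U i))
    (hindep : iIndepFun U ℙ)
    (hunif : ∀ i, Measure.map (U i) ℙ = volume.restrict (Set.Ioo (0 : ℝ) 1))
    (a : Fin n) (T : Finset (Fin n)) (ha : a ∉ T) (g : (T → ℝ) → ℝ) (hg : Measurable g) :
    ℙ {ω | U a ω = g (fun i => U i ω)} = 0 := by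
  have h1 : IndepFun (fun ω (i : ({a} : Finset (Fin n))) => U i ω)
      (fun ω (i : T) => U i ω) ℙ :=
    hindep.indepFun_finset {a} T (Finset.disjoint_singleton_left.mpr ha) hmeas
  have h2 : IndepFun (U a) (fun ω => g (fun i => U i ω)) ℙ := by
    have := h1.comp (φ := fun v : ({a} : Finset (Fin n)) → ℝ =>
      v ⟨a, Finset.mem_singleton_self a⟩) (ψ := g)
      (measurable_pi_apply (X := fun _ => ℝ)
        (⟨a, Finset.mem_singleton_self a⟩ : ({a} : Finset (Fin n)))) hg
    exact this
  refine eq_null _ _ (hmeas a) (hg.comp (measurable_pi_lambda _ fun i => hmeas i)) h2 ?_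
  intro t
  have hset : {ω | U a ω = t} = U a ⁻¹' {t} := rfl
  rw [hset, ← Measure.map_apply (hmeas a) (measurableSet_singleton t), hunif a,
    Measure.restrict_apply (measurableSet_singleton t)]
  exact measure_mono_null Set.inter_subset_left Real.volume_singleton

lemma as_quad (n : ℕ) {Ω : Type*} [MeasureSpace Ω] [IsProbabilityMeasure (ℙ : Measure Ω)]
    (U : Fin n → Ω → ℝ) (hmeas : ∀ i, Measurable (U i))
    (hindep : iIndepFun U ℙ)
    (hunif : ∀ i, Measure.map (U i) ℙ = volume.restrict (Set.Ioo (0 : ℝ) 1))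
    (a b c e : Fin n) (hab : a ≠ b) (hce : c ≠ e) (hne : (a, b) ≠ (c, e)) :
    ℙ {ω | U a ω - U b ω = U c ω - U e ω} = 0 := by
  classical
  have pair : ∀ p q : Fin n, p ≠ q → ℙ {ω | U p ω = U q ω} = 0 := by
    intro p q hpq
    exact aux_null n U hmeas hindep hunif p {q} (by simp [hpq])
      (fun v => v ⟨q, Finset.mem_singleton_self q⟩) (measurable_pi_apply _)
  by_cases hac : a = c
  · have hbe : b ≠ e := fun h => hne (by rw [hac, h])
    refine measure_mono_null ?_ (pair b e hbe)
    intro ω h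
    simp only [Set.mem_setOf_eq] at h ⊢
    rw [hac] at h; linarith
  by_cases hbe : b = e
  · refine measure_mono_null ?_ (pair a c hac)
    intro ω h
    simp only [Set.mem_setOf_eq] at h ⊢
    rw [hbe] at h; linarith
  by_cases hae : a = e
  · by_cases hbc : b = c
    · refine measure_mono_null ?_ (pair a b hab)
      intro ω h
      simp only [Set.mem_setOf_eq] at h ⊢
      rw [← hae, ← hbc] at h; linarith
    · have hb' : b ∈ ({b, c} : Finset (Fin n)) := by simp
      have hc' : c ∈ ({b, c} : Finset (Fin n)) := by simp
      have h0 := aux_null n U hmeas hindep hunif a {b, c}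
        (by simp [hab, hac])
        (fun v => (v ⟨b, hb'⟩ + v ⟨c, hc'⟩) / 2)
        (((measurable_pi_apply (⟨b, hb'⟩ : ({b, c} : Finset (Fin n)))).add
          (measurable_pi_apply (⟨c, hc'⟩ : ({b, c} : Finset (Fin n))))).div_const 2)
      refine measure_mono_null ?_ h0
      intro ω h
      simp only [Set.mem_setOf_eq] at h ⊢
      rw [← hae] at h; linarith
  · by_cases hbc : b = c
    · have hba : b ≠ a := Ne.symm hab
      have ha' : a ∈ ({a, e} : Finset (Fin n)) := by simp
      have he' : e ∈ ({a, e} : Finset (Fin n)) := by simp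
      have h0 := aux_null n U hmeas hindep hunif b {a, e}
        (by simp [hba, hbe])
        (fun v => (v ⟨a, ha'⟩ + v ⟨e, he'⟩) / 2)
        (((measurable_pi_apply (⟨a, ha'⟩ : ({a, e} : Finset (Fin n)))).add
          (measurable_pi_apply (⟨e, he'⟩ : ({a, e} : Finset (Fin n))))).div_const 2)
      refine measure_mono_null ?_ h0
      intro ω h
      simp only [Set.mem_setOf_eq] at h ⊢
      rw [← hbc] at h; linarith
    · have hb' : b ∈ ({b, c, e} : Finset (Fin n)) := by simp
      have hc' : c ∈ ({b, c, e} : Finset (Fin n)) := by simp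
      have he' : e ∈ ({b, c, e} : Finset (Fin n)) := by simp
      have h0 := aux_null n U hmeas hindep hunif a {b, c, e}
        (by simp [hab, hac, hae])
        (fun v => v ⟨b, hb'⟩ + v ⟨c, hc'⟩ - v ⟨e, he'⟩)
        (((measurable_pi_apply (⟨b, hb'⟩ : ({b, c, e} : Finset (Fin n)))).add
          (measurable_pi_apply (⟨c, hc'⟩ : ({b, c, e} : Finset (Fin n))))).sub
          (measurable_pi_apply (⟨e, he'⟩ : ({b, c, e} : Finset (Fin n)))))
      refine measure_mono_null ?_ h0
      intro ω h
      simp only [Set.mem_setOf_eq] at h ⊢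
      linarith

lemma good_event (n : ℕ) {Ω : Type*} [MeasureSpace Ω] [IsProbabilityMeasure (ℙ : Measure Ω)]
    (U : Fin n → Ω → ℝ) (hmeas : ∀ i, Measurable (U i))
    (hindep : iIndepFun U ℙ)
    (hunif : ∀ i, Measure.map (U i) ℙ = volume.restrict (Set.Ioo (0 : ℝ) 1)) :
    ∀ᵐ ω ∂ℙ, (∀ a b : Fin n, a ≠ b → U a ω ≠ U b ω) ∧
      (∀ a b c e : Fin n, a ≠ b → c ≠ e → (a, b) ≠ (c, e) →
        U a ω - U b ω ≠ U c ω - U e ω) := by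
  classical
  have pair : ∀ p q : Fin n, p ≠ q → ℙ {ω | U p ω = U q ω} = 0 := by
    intro p q hpq
    exact aux_null n U hmeas hindep hunif p {q} (by simp [hpq])
      (fun v => v ⟨q, Finset.mem_singleton_self q⟩) (measurable_pi_apply _)
  have H1 : ∀ᵐ ω ∂ℙ, ∀ a b : Fin n, a ≠ b → U a ω ≠ U b ω := by
    rw [ae_all_iff]; intro a
    rw [ae_all_iff]; intro b
    rcases eq_or_ne a b with h | h
    · exact Filter.Eventually.of_forall fun ω hne => absurd h hne
    · have hzero := pair a b h
      have : ∀ᵐ ω ∂ℙ, U a ω ≠ U b ω := by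
        rw [ae_iff]
        simpa only [ne_eq, not_not] using hzero
      exact this.mono fun ω hω _ => hω
  have H2 : ∀ᵐ ω ∂ℙ, ∀ a b c e : Fin n, a ≠ b → c ≠ e → (a, b) ≠ (c, e) →
      U a ω - U b ω ≠ U c ω - U e ω := by
    rw [ae_all_iff]; intro a
    rw [ae_all_iff]; intro b
    rw [ae_all_iff]; intro c
    rw [ae_all_iff]; intro e
    by_cases hcond : a ≠ b ∧ c ≠ e ∧ (a, b) ≠ (c, e)
    · obtain ⟨hab, hce, hne⟩ := hcond
      have hzero := as_quad n U hmeas hindep hunif a b c e hab hce hne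
      have : ∀ᵐ ω ∂ℙ, U a ω - U b ω ≠ U c ω - U e ω := by
        rw [ae_iff]
        simpa only [ne_eq, not_not] using hzero
      exact this.mono fun ω hω _ _ _ => hω
    · exact Filter.Eventually.of_forall fun ω h1 h2 h3 => absurd ⟨h1, h2, h3⟩ hcond
  exact H1.and H2

lemma isNN_comp (n : ℕ) (z : Fin n → ℝ) (σ : Equiv.Perm (Fin n)) (a w : Fin n) :
    isNN (z ∘ σ) a w ↔ isNN z (σ a) (σ w) := by
  constructor
  · rintro ⟨hne, hmin⟩
    refine ⟨σ.injective.ne hne, fun k hk => ?_⟩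
    have hne2 : σ.symm k ≠ a := fun h => hk (by rw [← h, Equiv.apply_symm_apply])
    have := hmin (σ.symm k) hne2
    simpa [Function.comp, Equiv.apply_symm_apply] using this
  · rintro ⟨hne, hmin⟩
    refine ⟨fun h => hne (congrArg σ h), fun k hk => ?_⟩
    exact hmin (σ k) (σ.injective.ne hk)

lemma sharedNNPairs_comp (n : ℕ) (z : Fin n → ℝ) (σ : Equiv.Perm (Fin n)) :
    sharedNNPairs n (z ∘ σ) = sharedNNPairs n z := by
  classical
  have key : ∀ v : Fin n → ℝ,
      2 * sharedNNPairs n v = (Finset.univ.filter fun p : Fin n × Fin n =>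
        p.1 ≠ p.2 ∧ ∃ w : Fin n, isNN v p.1 w ∧ isNN v p.2 w).card := by
    intro v
    set T := Finset.univ.filter fun p : Fin n × Fin n =>
        p.1 ≠ p.2 ∧ ∃ w : Fin n, isNN v p.1 w ∧ isNN v p.2 w with hT
    have hsplit := Finset.card_filter_add_card_filter_not
      (s := T) (p := fun p : Fin n × Fin n => p.1 < p.2)
    have h1 : T.filter (fun p => p.1 < p.2) = Finset.univ.filter fun p : Fin n × Fin n =>
        p.1 < p.2 ∧ ∃ w : Fin n, isNN v p.1 w ∧ isNN v p.2 w := by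
      rw [hT, Finset.filter_filter]
      ext p
      simp only [Finset.mem_filter, Finset.mem_univ, true_and]
      constructor
      · rintro ⟨⟨_, hq⟩, hlt⟩; exact ⟨hlt, hq⟩
      · rintro ⟨hlt, hq⟩; exact ⟨⟨ne_of_lt hlt, hq⟩, hlt⟩
    have h1' : (T.filter fun p => p.1 < p.2).card = sharedNNPairs n v := by
      rw [h1]; rfl
    have h2 : (T.filter fun p => ¬ p.1 < p.2).card = sharedNNPairs n v := by
      rw [sharedNNPairs]
      refine Finset.card_bij' (fun p _ => p.swap) (fun p _ => p.swap) ?_ ?_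
        (fun p _ => Prod.swap_swap p) (fun p _ => Prod.swap_swap p)
      · intro p hp
        simp only [hT, Finset.mem_filter, Finset.mem_univ, true_and] at hp ⊢
        obtain ⟨⟨hne, w, hw1, hw2⟩, hnlt⟩ := hp
        exact ⟨lt_of_le_of_ne (not_lt.mp hnlt) (Ne.symm hne), w, hw2, hw1⟩
      · intro p hp
        simp only [hT, Finset.mem_filter, Finset.mem_univ, true_and] at hp ⊢
        obtain ⟨hlt, w, hw1, hw2⟩ := hp
        exact ⟨⟨ne_of_gt hlt, w, hw2, hw1⟩, not_lt.mpr (le_of_lt hlt)⟩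
    omega
  have hbijT : (Finset.univ.filter fun p : Fin n × Fin n =>
      p.1 ≠ p.2 ∧ ∃ w : Fin n, isNN (z ∘ σ) p.1 w ∧ isNN (z ∘ σ) p.2 w).card =
      (Finset.univ.filter fun p : Fin n × Fin n =>
      p.1 ≠ p.2 ∧ ∃ w : Fin n, isNN z p.1 w ∧ isNN z p.2 w).card := by
    refine Finset.card_bij' (fun p _ => (σ p.1, σ p.2)) (fun p _ => (σ.symm p.1, σ.symm p.2))
      ?_ ?_ (fun p _ => by simp) (fun p _ => by simp)
    · intro p hp
      simp only [Finset.mem_filter, Finset.mem_univ, true_and] at hp ⊢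
      obtain ⟨hne, w, hw1, hw2⟩ := hp
      exact ⟨σ.injective.ne hne, σ w, (isNN_comp n z σ _ _).mp hw1, (isNN_comp n z σ _ _).mp hw2⟩
    · intro p hp
      simp only [Finset.mem_filter, Finset.mem_univ, true_and] at hp ⊢
      obtain ⟨hne, w, hw1, hw2⟩ := hp
      refine ⟨σ.symm.injective.ne hne, σ.symm w, ?_, ?_⟩
      · rw [isNN_comp n z σ]; simpa [Equiv.apply_symm_apply] using hw1
      · rw [isNN_comp n z σ]; simpa [Equiv.apply_symm_apply] using hw2
  have k1 := key (z ∘ σ)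
  have k2 := key z
  omega

lemma count_mono (n : ℕ) (hn : 4 ≤ n) (yy : ℕ → ℝ) (y : Fin n → ℝ)
    (hyy : ∀ k : Fin n, y k = yy k.val)
    (hmono : ∀ i j : ℕ, i < j → j < n → yy i < yy j)
    (hd : ∀ i j : ℕ, i + 1 < n → j + 1 < n → i ≠ j → yy (i + 1) - yy i ≠ yy (j + 1) - yy j) :
    sharedNNPairs n y =
      ∑ k ∈ Finset.range (n - 2),
        if (k = 0 ∨ yy (k + 1) - yy k < yy k - yy (k - 1)) ∧
            (k + 3 = n ∨ yy (k + 2) - yy (k + 1) < yy (k + 3) - yy (k + 2)) then 1 else 0 := by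
  classical
  have hyval : ∀ {a b : Fin n}, a ≠ b → a.val ≠ b.val := fun h hv => h (Fin.ext hv)
  have habs : ∀ a k : Fin n, a.val < k.val → |y a - y k| = yy k.val - yy a.val := by
    intro a k h
    rw [hyy, hyy, abs_sub_comm, abs_of_nonneg (sub_nonneg.mpr (hmono _ _ h k.isLt).le)]
  have habs' : ∀ a k : Fin n, k.val < a.val → |y a - y k| = yy a.val - yy k.val := by
    intro a k h
    rw [abs_sub_comm]; exact habs k a h
  -- nearest neighbors are adjacent
  have h_adj : ∀ a w : Fin n, isNN y a w → w.val = a.val + 1 ∨ w.val + 1 = a.val := by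
    intro a w ⟨hne, hmin⟩
    rcases lt_or_gt_of_ne (hyval (Ne.symm hne)) with hgt | hlt
    -- hgt : w.val < a.val ; hlt : a.val < w.val
    · right
      by_contra hcon
      have h0 : 0 < a.val := Nat.pos_of_ne_zero (by omega)
      have hk : a.val - 1 < n := by have := a.isLt; omega
      have hm := hmin ⟨a.val - 1, hk⟩ (Fin.ne_of_val_ne (show a.val - 1 ≠ a.val by omega))
      have e1 : |y a - y w| = yy a.val - yy w.val := habs' a w hgt
      have e2 : |y a - y ⟨a.val - 1, hk⟩| = yy a.val - yy (a.val - 1) :=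
        habs' a ⟨a.val - 1, hk⟩ (show a.val - 1 < a.val by omega)
      rw [e1, e2] at hm
      have := hmono w.val (a.val - 1) (by omega) hk
      linarith
    · left
      by_contra hcon
      have h2 : a.val + 1 < w.val := by omega
      have hk : a.val + 1 < n := lt_trans h2 w.isLt
      have hm := hmin ⟨a.val + 1, hk⟩ (Fin.ne_of_val_ne (show a.val + 1 ≠ a.val by omega))
      have e1 : |y a - y w| = yy w.val - yy a.val := habs a w hlt
      have e2 : |y a - y ⟨a.val + 1, hk⟩| = yy (a.val + 1) - yy a.val :=
        habs a ⟨a.val + 1, hk⟩ (show a.val < a.val + 1 by omega)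
      rw [e1, e2] at hm
      have := hmono (a.val + 1) w.val h2 w.isLt
      linarith
  -- right neighbor is NN
  have h_right : ∀ (a : ℕ) (h1 : a + 1 < n) (ha : a < n),
      (a = 0 ∨ yy (a + 1) - yy a < yy a - yy (a - 1)) →
      isNN y ⟨a, ha⟩ ⟨a + 1, h1⟩ := by
    intro a h1 ha hc
    refine ⟨Fin.ne_of_val_ne (show a ≠ a + 1 by omega), fun k hk => ?_⟩
    have hself : |y ⟨a, ha⟩ - y ⟨a + 1, h1⟩| = yy (a + 1) - yy a :=
      habs ⟨a, ha⟩ ⟨a + 1, h1⟩ (show a < a + 1 by omega)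
    rw [hself]
    rcases lt_or_gt_of_ne (hyval hk) with hlt | hgt
    · -- k.val < a
      have hlt' : k.val < a := hlt
      have ha0 : 0 < a := by omega
      rcases hc with h0 | hgap
      · exact absurd hlt' (by omega)
      · have e1 : |y ⟨a, ha⟩ - y k| = yy a - yy k.val := habs' ⟨a, ha⟩ k hlt
        rw [e1]
        have hk1 : yy k.val ≤ yy (a - 1) := by
          rcases eq_or_lt_of_le (show k.val ≤ a - 1 by omega) with he | hl
          · rw [he]
          · exact (hmono _ _ hl (by omega)).le
        linarith
    · -- a < k.val
      have hgt' : a < k.val := hgt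
      have e1 : |y ⟨a, ha⟩ - y k| = yy k.val - yy a := habs ⟨a, ha⟩ k hgt
      rw [e1]
      have hk1 : yy (a + 1) ≤ yy k.val := by
        rcases eq_or_lt_of_le (show a + 1 ≤ k.val by omega) with he | hl
        · rw [he]
        · exact (hmono _ _ hl k.isLt).le
      linarith
  -- left neighbor is NN
  have h_left : ∀ (b : ℕ) (h0 : 0 < b) (hb : b < n) (hbm : b - 1 < n),
      (b + 1 = n ∨ yy b - yy (b - 1) < yy (b + 1) - yy b) →
      isNN y ⟨b, hb⟩ ⟨b - 1, hbm⟩ := by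
    intro b h0 hb hbm hc
    refine ⟨Fin.ne_of_val_ne (show b ≠ b - 1 by omega), fun k hk => ?_⟩
    have hself : |y ⟨b, hb⟩ - y ⟨b - 1, hbm⟩| = yy b - yy (b - 1) :=
      habs' ⟨b, hb⟩ ⟨b - 1, hbm⟩ (show b - 1 < b by omega)
    rw [hself]
    rcases lt_or_gt_of_ne (hyval hk) with hlt | hgt
    · -- k.val < b
      have hlt' : k.val < b := hlt
      have e1 : |y ⟨b, hb⟩ - y k| = yy b - yy k.val := habs' ⟨b, hb⟩ k hlt
      rw [e1]
      have hk1 : yy k.val ≤ yy (b - 1) := by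
        rcases eq_or_lt_of_le (show k.val ≤ b - 1 by omega) with he | hl
        · rw [he]
        · exact (hmono _ _ hl hbm).le
      linarith
    · -- b < k.val
      have hgt' : b < k.val := hgt
      rcases hc with h1 | hgap
      · exact absurd h1 (by have := k.isLt; omega)
      · have e1 : |y ⟨b, hb⟩ - y k| = yy k.val - yy b := habs ⟨b, hb⟩ k hgt
        rw [e1]
        have hk1 : yy (b + 1) ≤ yy k.val := by
          rcases eq_or_lt_of_le (show b + 1 ≤ k.val by omega) with he | hl
          · rw [he]
          · exact (hmono _ _ hl k.isLt).le
        linarith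
  -- gap comparisons forced
  have h_right_gap : ∀ (a : ℕ) (h1 : a + 1 < n) (h0 : 0 < a) (ha : a < n),
      isNN y ⟨a, ha⟩ ⟨a + 1, h1⟩ → yy (a + 1) - yy a < yy a - yy (a - 1) := by
    intro a h1 h0 ha hnn
    obtain ⟨hne, hmin⟩ := hnn
    have hk : a - 1 < n := by omega
    have hm := hmin ⟨a - 1, hk⟩ (Fin.ne_of_val_ne (show a - 1 ≠ a by omega))
    have e1 : |y ⟨a, ha⟩ - y ⟨a + 1, h1⟩| = yy (a + 1) - yy a :=
      habs ⟨a, ha⟩ ⟨a + 1, h1⟩ (show a < a + 1 by omega)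
    have e2 : |y ⟨a, ha⟩ - y ⟨a - 1, hk⟩| = yy a - yy (a - 1) :=
      habs' ⟨a, ha⟩ ⟨a - 1, hk⟩ (show a - 1 < a by omega)
    rw [e1, e2] at hm
    refine lt_of_le_of_ne hm ?_
    have := hd a (a - 1) h1 (by omega) (by omega)
    rwa [show a - 1 + 1 = a by omega] at this
  have h_left_gap : ∀ (b : ℕ) (hb : b < n) (h1 : b + 1 < n) (h0 : 0 < b) (hbm : b - 1 < n),
      isNN y ⟨b, hb⟩ ⟨b - 1, hbm⟩ → yy b - yy (b - 1) < yy (b + 1) - yy b := by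
    intro b hb h1 h0 hbm hnn
    obtain ⟨hne, hmin⟩ := hnn
    have hm := hmin ⟨b + 1, h1⟩ (Fin.ne_of_val_ne (show b + 1 ≠ b by omega))
    have e1 : |y ⟨b, hb⟩ - y ⟨b - 1, hbm⟩| = yy b - yy (b - 1) :=
      habs' ⟨b, hb⟩ ⟨b - 1, hbm⟩ (show b - 1 < b by omega)
    have e2 : |y ⟨b, hb⟩ - y ⟨b + 1, h1⟩| = yy (b + 1) - yy b :=
      habs ⟨b, hb⟩ ⟨b + 1, h1⟩ (show b < b + 1 by omega)
    rw [e1, e2] at hm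
    refine lt_of_le_of_ne hm ?_
    have := hd (b - 1) b (by omega) h1 (by omega)
    rwa [show b - 1 + 1 = b by omega] at this
  -- pair characterization
  have pairchar : ∀ a b : Fin n, a.val < b.val →
      ((∃ w, isNN y a w ∧ isNN y b w) ↔
        (b.val = a.val + 2 ∧
          (a.val = 0 ∨ yy (a.val + 1) - yy a.val < yy a.val - yy (a.val - 1)) ∧
          (a.val + 3 = n ∨
            yy (a.val + 2) - yy (a.val + 1) < yy (a.val + 3) - yy (a.val + 2)))) := by
    intro a b hab
    constructor
    · rintro ⟨w, hwa, hwb⟩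
      have h1 := h_adj a w hwa
      have h2 := h_adj b w hwb
      have hb2 : b.val = a.val + 2 := by omega
      have hw : w.val = a.val + 1 := by omega
      have hwlt : a.val + 1 < n := hw ▸ w.isLt
      refine ⟨hb2, ?_, ?_⟩
      · rcases Nat.eq_zero_or_pos a.val with h0 | h0
        · exact Or.inl h0
        · right
          have hweq : w = ⟨a.val + 1, hwlt⟩ := Fin.ext hw
          rw [hweq] at hwa
          exact h_right_gap a.val hwlt h0 a.isLt hwa
      · rcases Nat.lt_or_ge (b.val + 1) n with hb1 | hb1
        · right
          have hbm : b.val - 1 < n := by omega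
          have hweq : w = ⟨b.val - 1, hbm⟩ := Fin.ext (show w.val = b.val - 1 by omega)
          rw [hweq] at hwb
          have hgap := h_left_gap b.val b.isLt hb1 (by omega) hbm hwb
          rw [hb2, show a.val + 2 - 1 = a.val + 1 by omega,
            show a.val + 2 + 1 = a.val + 3 by omega] at hgap
          exact hgap
        · left; have := b.isLt; omega
    · rintro ⟨hb2, hc1, hc2⟩
      have hwlt : a.val + 1 < n := by have := b.isLt; omega
      refine ⟨⟨a.val + 1, hwlt⟩, ?_, ?_⟩
      · exact h_right a.val hwlt a.isLt hc1
      · have h0 : 0 < b.val := by omega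
        have hbm : b.val - 1 < n := by have := b.isLt; omega
        have hclause : b.val + 1 = n ∨ yy b.val - yy (b.val - 1) < yy (b.val + 1) - yy b.val := by
          rcases hc2 with h | h
          · left; omega
          · right
            rw [hb2, show a.val + 2 - 1 = a.val + 1 by omega,
              show a.val + 2 + 1 = a.val + 3 by omega]
            exact h
        have hL := h_left b.val h0 b.isLt hbm hclause
        have hweq : (⟨b.val - 1, hbm⟩ : Fin n) = ⟨a.val + 1, hwlt⟩ :=
          Fin.ext (show b.val - 1 = a.val + 1 by omega)
        rw [hweq] at hL
        exact hL
  -- counting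
  have hfilter : (Finset.univ.filter fun p : Fin n × Fin n =>
      p.1 < p.2 ∧ ∃ w : Fin n, isNN y p.1 w ∧ isNN y p.2 w) =
      (Finset.univ.filter fun p : Fin n × Fin n =>
        p.2.val = p.1.val + 2 ∧
          (p.1.val = 0 ∨ yy (p.1.val + 1) - yy p.1.val < yy p.1.val - yy (p.1.val - 1)) ∧
          (p.1.val + 3 = n ∨
            yy (p.1.val + 2) - yy (p.1.val + 1) < yy (p.1.val + 3) - yy (p.1.val + 2))) := by
    ext p
    simp only [Finset.mem_filter, Finset.mem_univ, true_and]
    constructor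
    · rintro ⟨hlt, hex⟩
      exact (pairchar p.1 p.2 hlt).mp hex
    · rintro ⟨he, hc⟩
      have hlt : p.1.val < p.2.val := by omega
      exact ⟨hlt, (pairchar p.1 p.2 hlt).mpr ⟨he, hc⟩⟩
  rw [sharedNNPairs, hfilter]
  have hcard2 : (Finset.univ.filter fun p : Fin n × Fin n =>
        p.2.val = p.1.val + 2 ∧
          (p.1.val = 0 ∨ yy (p.1.val + 1) - yy p.1.val < yy p.1.val - yy (p.1.val - 1)) ∧
          (p.1.val + 3 = n ∨
            yy (p.1.val + 2) - yy (p.1.val + 1) < yy (p.1.val + 3) - yy (p.1.val + 2))).card =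
      (Finset.univ.filter fun a : Fin n =>
        a.val + 2 < n ∧
          (a.val = 0 ∨ yy (a.val + 1) - yy a.val < yy a.val - yy (a.val - 1)) ∧
          (a.val + 3 = n ∨
            yy (a.val + 2) - yy (a.val + 1) < yy (a.val + 3) - yy (a.val + 2))).card := by
    refine Finset.card_bij' (fun p _ => p.1)
      (fun a ha => (a, ⟨a.val + 2, (Finset.mem_filter.mp ha).2.1⟩)) ?_ ?_ ?_ ?_
    · intro p hp
      simp only [Finset.mem_filter, Finset.mem_univ, true_and] at hp ⊢
      obtain ⟨he, hc⟩ := hp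
      exact ⟨he ▸ p.2.isLt, hc⟩
    · intro a ha
      simp only [Finset.mem_filter, Finset.mem_univ, true_and] at ha ⊢
      exact ⟨ha.2.1, ha.2.2⟩
    · intro p hp
      simp only [Finset.mem_filter, Finset.mem_univ, true_and] at hp
      exact Prod.ext rfl (Fin.ext hp.1.symm)
    · intro a ha; rfl
  rw [hcard2, Finset.card_filter]
  rw [Fin.sum_univ_eq_sum_range (fun m => if (m + 2 < n ∧
      (m = 0 ∨ yy (m + 1) - yy m < yy m - yy (m - 1)) ∧
      (m + 3 = n ∨ yy (m + 2) - yy (m + 1) < yy (m + 3) - yy (m + 2))) then 1 else 0) n]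
  rw [← Finset.sum_subset (Finset.range_subset_range.mpr (show n - 2 ≤ n by omega))
    (fun x _ hnx => if_neg (fun hcon => absurd hcon.1
      (by simp only [Finset.mem_range] at hnx; omega)))]
  refine Finset.sum_congr rfl fun k hk => ?_
  have hk2 : k + 2 < n := by simp only [Finset.mem_range] at hk; omega
  simp only [hk2, true_and]


lemma core (n : ℕ) (hn : 4 ≤ n) (x : Fin n → ℝ) (hinj : Function.Injective x)
    (hdiff : ∀ a b c e : Fin n, a ≠ b → c ≠ e → (a, b) ≠ (c, e) → x a - x b ≠ x c - x e) :
    sharedNNPairs n x =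
      (if spacing n x 2 < spacing n x 3 then 1 else 0) +
        (∑ i ∈ Finset.Icc 2 (n - 3),
          if spacing n x i < spacing n x (i - 1) ∧
              spacing n x (i + 1) < spacing n x (i + 2) then 1 else 0) +
        (if spacing n x (n - 2) < spacing n x (n - 3) then 1 else 0) := by
  classical
  set s : List ℝ := (Finset.univ.image x).sort (· ≤ ·) with hs
  have hcard : (Finset.univ.image x).card = n := by
    rw [Finset.card_image_of_injective _ hinj, Finset.card_univ, Fintype.card_fin]
  have hlen : s.length = n := by rw [hs, Finset.length_sort, hcard]
  set yy : ℕ → ℝ := fun k => s.getD k 0 with hyy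
  have hsorted : List.Pairwise (· < ·) s := (Finset.univ.image x).sortedLT_sort.pairwise
  have hmono : ∀ i j : ℕ, i < j → j < n → yy i < yy j := by
    intro i j hij hj
    have hi' : i < s.length := by omega
    have hj' : j < s.length := by omega
    have := (List.pairwise_iff_getElem.mp hsorted) i j hi' hj' hij
    simpa [hyy, List.getD_eq_getElem?_getD, List.getElem?_eq_getElem hi',
      List.getElem?_eq_getElem hj'] using this
  have hmem : ∀ k, k < n → ∃ a, x a = yy k := by
    intro k hk
    have hk' : k < s.length := by omega
    have hmem2 : s[k] ∈ s := List.getElem_mem hk'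
    have hmem3 : s[k] ∈ Finset.univ.image x := (Finset.mem_sort _).mp hmem2
    obtain ⟨a, _, ha⟩ := Finset.mem_image.mp hmem3
    refine ⟨a, ?_⟩
    rw [ha, hyy]
    simp [List.getD_eq_getElem?_getD, List.getElem?_eq_getElem hk']
  have hdgap : ∀ i j : ℕ, i + 1 < n → j + 1 < n → i ≠ j →
      yy (i + 1) - yy i ≠ yy (j + 1) - yy j := by
    intro i j hi hj hij heq
    obtain ⟨a, ha⟩ := hmem (i + 1) hi
    obtain ⟨b, hb⟩ := hmem i (by omega)
    obtain ⟨c, hc⟩ := hmem (j + 1) hj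
    obtain ⟨e, he⟩ := hmem j (by omega)
    have hiy : yy i < yy (i + 1) := hmono i (i + 1) (by omega) hi
    have hjy : yy j < yy (j + 1) := hmono j (j + 1) (by omega) hj
    have hab : a ≠ b := fun h => by rw [h, hb] at ha; linarith
    have hce : c ≠ e := fun h => by rw [h, he] at hc; linarith
    have hpair : (a, b) ≠ (c, e) := by
      intro h
      have h1 : a = c := congrArg Prod.fst h
      rw [h1, hc] at ha
      have : i + 1 = j + 1 := by
        by_contra hne
        rcases Nat.lt_or_ge (i + 1) (j + 1) with hl | hg
        · have := hmono (i + 1) (j + 1) hl hj; linarith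
        · have := hmono (j + 1) (i + 1) (by omega) hi; linarith
      omega
    exact hdiff a b c e hab hce hpair (by rw [ha, hb, hc, he]; exact heq)
  -- bijection with sorted order
  have hch : ∀ k : Fin n, ∃ a, x a = yy k.val := fun k => hmem k.val k.isLt
  choose τ hτ using hch
  have hinjτ : Function.Injective τ := by
    intro k k' h
    have hyk : yy k.val = yy k'.val := by rw [← hτ k, ← hτ k', h]
    by_contra hne
    have hvne : k.val ≠ k'.val := fun hv => hne (Fin.ext hv)
    rcases Nat.lt_or_ge k.val k'.val with hl | hg
    · have := hmono k.val k'.val hl k'.isLt; linarith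
    · have := hmono k'.val k.val (by omega) k.isLt; linarith
  have hbijτ : Function.Bijective τ := Finite.injective_iff_bijective.mp hinjτ
  have hrel : sharedNNPairs n (fun k : Fin n => yy k.val) = sharedNNPairs n x := by
    have hcomp := sharedNNPairs_comp n x (Equiv.ofBijective τ hbijτ)
    rw [show x ∘ (Equiv.ofBijective τ hbijτ) = fun k : Fin n => yy k.val from
      funext fun k => hτ k] at hcomp
    exact hcomp
  rw [← hrel, count_mono n hn yy _ (fun k => rfl) hmono hdgap]
  -- translate to spacings
  have hspace : ∀ m : ℕ, spacing n x m = yy m - yy (m - 1) := by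
    intro m
    rw [spacing, orderStat, orderStat, ← hs]
    simp [hyy, Nat.add_sub_cancel]
  -- split the sum
  have e1 : n - 2 = (n - 3) + 1 := by omega
  have e2 : n - 3 = (n - 4) + 1 := by omega
  rw [(by rw [e1] : Finset.range (n - 2) = Finset.range ((n - 3) + 1)),
    Finset.sum_range_succ,
    (by rw [← e2] : Finset.range (n - 3) = Finset.range ((n - 4) + 1)),
    Finset.sum_range_succ']
  have hA : (if (0 = 0 ∨ yy (0 + 1) - yy 0 < yy 0 - yy (0 - 1)) ∧
      (0 + 3 = n ∨ yy (0 + 2) - yy (0 + 1) < yy (0 + 3) - yy (0 + 2)) then 1 else 0) =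
      (if spacing n x 2 < spacing n x 3 then (1 : ℕ) else 0) := by
    rw [hspace 2, hspace 3]
    refine if_congr ?_ rfl rfl
    constructor
    · rintro ⟨-, h | h⟩
      · exact absurd h (by omega)
      · norm_num at h ⊢; exact h
    · intro h
      refine ⟨Or.inl rfl, Or.inr ?_⟩
      norm_num at h ⊢; exact h
  have hB : (if (n - 3 = 0 ∨ yy (n - 3 + 1) - yy (n - 3) < yy (n - 3) - yy (n - 3 - 1)) ∧
      (n - 3 + 3 = n ∨ yy (n - 3 + 2) - yy (n - 3 + 1) < yy (n - 3 + 3) - yy (n - 3 + 2))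
        then 1 else 0) =
      (if spacing n x (n - 2) < spacing n x (n - 3) then (1 : ℕ) else 0) := by
    rw [hspace (n - 2), hspace (n - 3)]
    rw [show n - 2 - 1 = n - 3 by omega, show n - 3 - 1 = n - 4 by omega,
      show n - 3 + 1 = n - 2 by omega]
    refine if_congr ?_ rfl rfl
    constructor
    · rintro ⟨h | h, -⟩
      · exact absurd h (by omega)
      · exact h
    · intro h
      exact ⟨Or.inr h, Or.inl (by omega)⟩
  have hMid : (∑ i ∈ Finset.Icc 2 (n - 3),
      if spacing n x i < spacing n x (i - 1) ∧
          spacing n x (i + 1) < spacing n x (i + 2) then 1 else 0) =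
      ∑ i ∈ Finset.range (n - 4),
        (if (i + 1 = 0 ∨ yy (i + 1 + 1) - yy (i + 1) < yy (i + 1) - yy (i + 1 - 1)) ∧
            (i + 1 + 3 = n ∨ yy (i + 1 + 2) - yy (i + 1 + 1) < yy (i + 1 + 3) - yy (i + 1 + 2))
          then (1 : ℕ) else 0) := by
    rw [← Finset.Ico_add_one_right_eq_Icc, Finset.sum_Ico_eq_sum_range, show n - 3 + 1 - 2 = n - 4 by omega]
    refine Finset.sum_congr rfl fun i hi => ?_
    have hi4 : i < n - 4 := by simpa using hi
    rw [hspace (2 + i), hspace (2 + i - 1), hspace (2 + i + 1), hspace (2 + i + 2)]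
    rw [show 2 + i = i + 2 by omega]
    rw [show i + 2 - 1 = i + 1 by omega, show i + 1 - 1 = i by omega,
      show i + 2 + 1 = i + 3 by omega, show i + 3 - 1 = i + 2 by omega,
      show i + 2 + 2 = i + 4 by omega, show i + 4 - 1 = i + 3 by omega,
      show i + 1 + 1 = i + 2 by omega, show i + 1 + 2 = i + 3 by omega,
      show i + 1 + 3 = i + 4 by omega]
    refine if_congr ?_ rfl rfl
    constructor
    · rintro ⟨h1, h2⟩
      exact ⟨Or.inr h1, Or.inr h2⟩
    · rintro ⟨h1 | h1, h2 | h2⟩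
      · exact absurd h1 (by omega)
      · exact absurd h1 (by omega)
      · exact absurd h2 (by omega)
      · exact ⟨h1, h2⟩
  rw [hA, hB, hMid]
  ring

/-- For i.i.d. `U(0,1)` points `U_1, …, U_n` with `n ≥ 4`, almost surely the number of
shared NN pairs equals
`1_{D_2<D_3} + Σ_{i=2}^{n-3} 1_{D_i<D_{i-1}, D_{i+1}<D_{i+2}} + 1_{D_{n-2}<D_{n-3}}`. -/
theorem sharedNNPairs_eq_spacing_indicators (n : ℕ) (hn : 4 ≤ n)
    {Ω : Type*} [MeasureSpace Ω] [IsProbabilityMeasure (ℙ : Measure Ω)]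
    (U : Fin n → Ω → ℝ) (hmeas : ∀ i, Measurable (U i))
    (hindep : iIndepFun U ℙ)
    (hunif : ∀ i, Measure.map (U i) ℙ = volume.restrict (Set.Ioo (0 : ℝ) 1)) :
    ∀ᵐ ω ∂ℙ,
      (sharedNNPairs n fun i => U i ω) =
        (if spacing n (fun i => U i ω) 2 < spacing n (fun i => U i ω) 3 then 1 else 0) +
          (∑ i ∈ Finset.Icc 2 (n - 3),
            if spacing n (fun j => U j ω) i < spacing n (fun j => U j ω) (i - 1) ∧
                spacing n (fun j => U j ω) (i + 1) < spacing n (fun j => U j ω) (i + 2)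
              then 1 else 0) +
          (if spacing n (fun i => U i ω) (n - 2) < spacing n (fun i => U i ω) (n - 3)
            then 1 else 0) := by
  filter_upwards [good_event n U hmeas hindep hunif] with ω hω
  obtain ⟨h1, h2⟩ := hω
  exact core n hn (fun i => U i ω)
    (fun a b hxy => by by_contra hne; exact h1 a b hne hxy)
    (fun a b c e hab hce hne => h2 a b c e hab hce hne)
end
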